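/- arXiv:2002.09368 — 8 statements merged into one kernel-verified Lean document; each statement's English description precedes it below -/
import Mathlib

section
/- Let α(0),…,α(r) ∈ ℝⁿ be affinely independent points, let λ_0,…,λ_r > 0 with ∑_{j=0}^r λ_j = 1, and set β = ∑_{j=0}^r λ_j·α(j). Let c_0,…,c_r > 0 and c_β ∈ ℝ. Then the exponential sum f(x) = ∑_{j=0}^r c_j·exp(⟨x,α(j)⟩) + c_β·exp(⟨x,β⟩) is nonnegative for all x ∈ ℝⁿ if and only if −c_β ≤ ∏_{j=0}^r (c_j/λ_j)^{λ_j} (the right-hand side is called the circuit number Θ_f). -/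
/-!
Write `Θ` for the circuit number. Weighted AM–GM with weights `λ_j`, applied to the numbers
`(c_j / λ_j) e^{⟨x, α(j)⟩}`, gives `∑ c_j e^{⟨x, α(j)⟩} ≥ Θ e^{⟨x, β⟩}`, hence
`f(x) ≥ (Θ + c_β) e^{⟨x, β⟩}`. Equality holds in AM–GM exactly when
`⟨x, α(j)⟩ - log (λ_j / c_j)` does not depend on `j`; since the `α(j)` are affinely independent,
an affine function takes arbitrary prescribed values at them, so such an `x` exists, and at it
`f(x) = (Θ + c_β) e^{⟨x, β⟩}`.
-/

open Finset Real

section AffineIndependent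

variable {ι K V : Type*} [Field K] [AddCommGroup V] [Module K V]

theorem LinearIndependent.exists_linearMap_eq {v : ι → V} (hv : LinearIndependent K v)
    (w : ι → K) :
    ∃ φ : V →ₗ[K] K, ∀ i, φ (v i) = w i := by
  obtain ⟨φ, hφ⟩ := LinearMap.exists_extend ((Module.Basis.span hv).constr K w)
  refine ⟨φ, fun i => ?_⟩
  have := congr($hφ (Module.Basis.span hv i))
  rwa [LinearMap.comp_apply, Module.Basis.constr_basis, Submodule.subtype_apply,
    Module.Basis.span_apply] at this

theorem AffineIndependent.linearIndependent_prod_one {p : ι → V} (hp : AffineIndependent K p) :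
    LinearIndependent K fun i => (p i, (1 : K)) := by
  rw [linearIndependent_iff']
  intro s g hg
  simp only [Prod.smul_mk, smul_eq_mul, mul_one, Prod.ext_iff, Prod.fst_sum, Prod.snd_sum,
    Prod.fst_zero, Prod.snd_zero] at hg
  exact affineIndependent_iff.mp hp s g hg.2 hg.1

theorem AffineIndependent.exists_linearMap_eq_add_const {p : ι → V} (hp : AffineIndependent K p)
    (w : ι → K) :
    ∃ (φ : V →ₗ[K] K) (t : K), ∀ i, φ (p i) = w i + t := by
  obtain ⟨ψ, hψ⟩ := hp.linearIndependent_prod_one.exists_linearMap_eq w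
  refine ⟨ψ ∘ₗ LinearMap.inl K V K, -ψ (0, 1), fun i => ?_⟩
  have hsplit : (p i, (1 : K)) = (p i, 0) + (0, 1) := by simp
  rw [← hψ i, hsplit, map_add]
  simp

end AffineIndependent

theorem AffineIndependent.exists_dotProduct_eq_add_const {ι m : Type*} [Fintype m]
    {α : ι → m → ℝ} (hα : AffineIndependent ℝ α) (w : ι → ℝ) :
    ∃ (x : m → ℝ) (t : ℝ), ∀ i, x ⬝ᵥ α i = w i + t := by
  classical
  obtain ⟨φ, t, hφ⟩ := hα.exists_linearMap_eq_add_const w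
  refine ⟨fun k => φ (Pi.single k 1), t, fun i => ?_⟩
  rw [← hφ i]
  conv_rhs => rw [← univ_sum_single (α i), map_sum]
  refine sum_congr rfl fun k _ => ?_
  change φ (Pi.single k 1) * α i k = φ (Pi.single k (α i k))
  rw [mul_comm, ← smul_eq_mul, ← map_smul, ← Pi.single_smul', smul_eq_mul, mul_one]

section CircuitNumber

variable {ι : Type*} [Fintype ι] {lam c : ι → ℝ}

noncomputable def circuitNumber (lam c : ι → ℝ) : ℝ := ∏ j, (c j / lam j) ^ lam j

theorem prod_rpow_div_mul_exp (hlam : ∀ j, 0 ≤ lam j) (hc : ∀ j, 0 ≤ c j) (y : ι → ℝ) :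
    ∏ j, (c j / lam j * exp (y j)) ^ lam j = circuitNumber lam c * exp (∑ j, lam j * y j) := by
  rw [circuitNumber, exp_sum, ← prod_mul_distrib]
  refine prod_congr rfl fun j _ => ?_
  rw [mul_rpow (div_nonneg (hc j) (hlam j)) (exp_nonneg _), ← exp_mul, mul_comm (y j)]

theorem sum_mul_div_mul_exp (hlam : ∀ j, lam j ≠ 0) (y : ι → ℝ) :
    ∑ j, lam j * (c j / lam j * exp (y j)) = ∑ j, c j * exp (y j) :=
  sum_congr rfl fun j _ => by field_simp [hlam j]

theorem circuitNumber_mul_exp_le (hlam : ∀ j, 0 < lam j) (hlam1 : ∑ j, lam j = 1)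
    (hc : ∀ j, 0 ≤ c j) (y : ι → ℝ) :
    circuitNumber lam c * exp (∑ j, lam j * y j) ≤ ∑ j, c j * exp (y j) := by
  rw [← prod_rpow_div_mul_exp (fun j => (hlam j).le) hc, ← sum_mul_div_mul_exp
    (fun j => (hlam j).ne') y]
  exact geom_mean_le_arith_mean_weighted univ lam _ (fun j _ => (hlam j).le) hlam1
    fun j _ => mul_nonneg (div_nonneg (hc j) (hlam j).le) (exp_nonneg _)

theorem circuitNumber_mul_exp_eq_of_eq_log_add (hlam : ∀ j, 0 < lam j)
    (hlam1 : ∑ j, lam j = 1) (hc : ∀ j, 0 < c j) {y : ι → ℝ} {t : ℝ}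
    (hy : ∀ j, y j = log (lam j / c j) + t) :
    circuitNumber lam c * exp (∑ j, lam j * y j) = ∑ j, c j * exp (y j) := by
  rw [← prod_rpow_div_mul_exp (fun j => (hlam j).le) (fun j => (hc j).le), ← sum_mul_div_mul_exp
    (fun j => (hlam j).ne') y]
  refine geom_mean_eq_arith_mean_weighted_of_constant univ lam _ (exp t) (fun j _ => (hlam j).le)
    hlam1 (fun j _ => mul_nonneg (div_nonneg (hc j).le (hlam j).le) (exp_nonneg _))
    fun j _ _ => ?_
  rw [hy j, exp_add, exp_log (div_pos (hlam j) (hc j))]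
  field_simp [(hlam j).ne', (hc j).ne']

end CircuitNumber

/-- A nonnegative circuit criterion for exponential sums (circuit number). -/
theorem circuit_nonneg_iff_circuit_number {n r : ℕ}
    (α : Fin (r + 1) → (Fin n → ℝ)) (hα : AffineIndependent ℝ α)
    (lam : Fin (r + 1) → ℝ) (hlam : ∀ j, 0 < lam j) (hlam1 : ∑ j, lam j = 1)
    (β : Fin n → ℝ) (hβ : β = ∑ j, lam j • α j)
    (c : Fin (r + 1) → ℝ) (hc : ∀ j, 0 < c j) (cβ : ℝ) :
    (∀ x : Fin n → ℝ,
        0 ≤ ∑ j, c j * Real.exp (∑ i, x i * α j i) + cβ * Real.exp (∑ i, x i * β i))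
      ↔ -cβ ≤ ∏ j, (c j / lam j) ^ (lam j) := by
  change (∀ x : Fin n → ℝ, 0 ≤ ∑ j, c j * exp (x ⬝ᵥ α j) + cβ * exp (x ⬝ᵥ β)) ↔
    -cβ ≤ circuitNumber lam c
  have hβx (x : Fin n → ℝ) : x ⬝ᵥ β = ∑ j, lam j * x ⬝ᵥ α j := by
    simp only [hβ, dotProduct_sum, dotProduct_smul, smul_eq_mul]
  constructor
  · intro hf
    obtain ⟨x, t, hx⟩ := hα.exists_dotProduct_eq_add_const fun j => log (lam j / c j)
    have hfx := hf x
    rw [← circuitNumber_mul_exp_eq_of_eq_log_add hlam hlam1 hc hx, ← hβx, ← add_mul] at hfx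
    linarith [nonneg_of_mul_nonneg_left hfx (exp_pos _)]
  · intro hΘ x
    calc 0 ≤ (circuitNumber lam c + cβ) * exp (x ⬝ᵥ β) := mul_nonneg (by linarith) (exp_nonneg _)
      _ ≤ _ := by
        rw [add_mul, hβx]
        gcongr
        exact circuitNumber_mul_exp_le hlam hlam1 (fun j => (hc j).le) _
end

section
/- Let A' ⊆ ℝⁿ be a finite set, let c_α > 0 for all α ∈ A', let β ∈ ℝⁿ with β ∉ A' and c_β < 0. If the exponential sum f(x) = ∑_{α∈A'} c_α·exp(⟨x,α⟩) + c_β·exp(⟨x,β⟩) is nonnegative for all x ∈ ℝⁿ, then β lies in the convex hull of A'. -/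
/-!
If `β` lies outside the convex hull of `A'`, some `w` strictly separates it:
`w ⬝ᵥ α < w ⬝ᵥ β` for all `α ∈ A'`. Along the ray `x = t • w`, after dividing by
`exp (t * (w ⬝ᵥ β))`, every term indexed by `A'` decays to `0` as `t → ∞`, so the exponential
sum eventually has the sign of `cβ < 0`.
-/

open Finset Filter Topology Real

theorem exists_dotProduct_lt_of_notMem_convexHull {ι : Type*} [Fintype ι]
    {A : Finset (ι → ℝ)} {β : ι → ℝ} (hβ : β ∉ convexHull ℝ (A : Set (ι → ℝ))) :
    ∃ w : ι → ℝ, ∀ α ∈ A, w ⬝ᵥ α < w ⬝ᵥ β := by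
  classical
  obtain ⟨f, u, hfA, hfβ⟩ := geometric_hahn_banach_closed_point
    (convex_convexHull ℝ _) (A.finite_toSet.isClosed_convexHull ℝ) hβ
  have hf (y : ι → ℝ) : f y = (fun i ↦ f fun j ↦ if i = j then 1 else 0) ⬝ᵥ y := by
    rw [dotProduct_comm]
    exact f.toLinearMap.pi_apply_eq_sum_univ y
  refine ⟨fun i ↦ f fun j ↦ if i = j then 1 else 0, fun α hα ↦ ?_⟩
  rw [← hf, ← hf]
  exact (hfA α (subset_convexHull ℝ _ hα)).trans hfβ

theorem tendsto_sum_mul_exp_mul_atTop_zero {ι : Type*} (s : Finset ι) (c a : ι → ℝ)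
    (ha : ∀ i ∈ s, a i < 0) :
    Tendsto (fun t ↦ ∑ i ∈ s, c i * exp (t * a i)) atTop (𝓝 0) := by
  rw [← s.sum_const_zero]
  refine tendsto_finsetSum s fun i hi ↦ ?_
  simpa using (tendsto_exp_atBot.comp
    (tendsto_id.atTop_mul_const_of_neg (ha i hi))).const_mul (c i)

theorem exists_sum_mul_exp_mul_add_mul_exp_mul_neg {ι : Type*} (s : Finset ι) (c a : ι → ℝ)
    {b d : ℝ} (hab : ∀ i ∈ s, a i < b) (hd : d < 0) :
    ∃ t, ∑ i ∈ s, c i * exp (t * a i) + d * exp (t * b) < 0 := by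
  have hlim := tendsto_sum_mul_exp_mul_atTop_zero s c (fun i ↦ a i - b)
    fun i hi ↦ sub_neg.2 (hab i hi)
  obtain ⟨t, ht⟩ := (hlim.eventually (gt_mem_nhds (neg_pos.2 hd))).exists
  refine ⟨t, ?_⟩
  have hsplit : ∑ i ∈ s, c i * exp (t * a i) + d * exp (t * b)
      = (∑ i ∈ s, c i * exp (t * (a i - b)) + d) * exp (t * b) := by
    simp only [add_mul, sum_mul, mul_assoc, ← exp_add]
    ring_nf
  rw [hsplit]
  exact mul_neg_of_neg_of_pos (by linarith) (exp_pos _)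

theorem age_nonneg_beta_mem_convexHull_general {n : ℕ}
    (A' : Finset (Fin n → ℝ)) (c : (Fin n → ℝ) → ℝ)
    (β : Fin n → ℝ) (cβ : ℝ) (hcβ : cβ < 0)
    (hnn : ∀ x : Fin n → ℝ,
      0 ≤ (∑ α ∈ A', c α * Real.exp (∑ i, x i * α i)) + cβ * Real.exp (∑ i, x i * β i)) :
    β ∈ convexHull ℝ (A' : Set (Fin n → ℝ)) := by
  by_contra hβ
  obtain ⟨w, hw⟩ := exists_dotProduct_lt_of_notMem_convexHull hβ
  obtain ⟨t, ht⟩ := exists_sum_mul_exp_mul_add_mul_exp_mul_neg A' c (w ⬝ᵥ ·) hw hcβ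
  have hval := hnn (t • w)
  simp only [← dotProduct.eq_1, smul_dotProduct, smul_eq_mul] at hval
  linarith

/-- If an AGE exponential sum (with positive coefficients on `A'` and a single
negative coefficient on `β ∉ A'`) is nonnegative on `ℝⁿ`, then `β` lies in the convex hull
of `A'`. -/
theorem age_nonneg_beta_mem_convexHull {n : ℕ}
    (A' : Finset (Fin n → ℝ)) (c : (Fin n → ℝ) → ℝ) (hc : ∀ α ∈ A', 0 < c α)
    (β : Fin n → ℝ) (hβ : β ∉ A') (cβ : ℝ) (hcβ : cβ < 0)
    (hnn : ∀ x : Fin n → ℝ,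
      0 ≤ (∑ α ∈ A', c α * Real.exp (∑ i, x i * α i)) + cβ * Real.exp (∑ i, x i * β i)) :
    β ∈ convexHull ℝ (A' : Set (Fin n → ℝ)) :=
  age_nonneg_beta_mem_convexHull_general A' c β cβ hcβ hnn
end

section
/- Let A ⊆ ℝⁿ be a finite set and v : A → ℝ a coefficient vector such that the exponential sum f_v(x) = ∑_{γ∈A} v_γ·exp(⟨x,γ⟩) is nonnegative for all x ∈ ℝⁿ. If α₀ ∈ A is an extreme point of the convex hull of A, then v_{α₀} ≥ 0. -/
/-!
Separate the extreme point `α₀` strictly from the other points of `A` by a linear functional `f`,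
and restrict the exponential sum to the ray `t • w`, where `w` represents `f`. Up to the positive
factor `exp (t * f α₀)` this is `∑ γ, v γ * exp (t * (f γ - f α₀))`, which stays nonnegative and
tends to `v α₀` as `t → ∞`, since every other exponent is negative.
-/

open Filter Topology Real

section Separation

variable {E : Type*} [AddCommGroup E] [Module ℝ E]

theorem notMem_convexHull_sdiff_of_mem_extremePoints_convexHull {s : Set E} {x : E}
    (hx : x ∈ (convexHull ℝ s).extremePoints ℝ) : x ∉ convexHull ℝ (s \ {x}) := fun hmem ↦
  ((convex_convexHull ℝ s).mem_extremePoints_iff_mem_sdiff_convexHull_sdiff.1 hx).2 <|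
    convexHull_mono (Set.sdiff_subset_sdiff_left (subset_convexHull ℝ s)) hmem

variable [TopologicalSpace E] [IsTopologicalAddGroup E] [ContinuousSMul ℝ E]
  [LocallyConvexSpace ℝ E] [T2Space E]

theorem Set.Finite.exists_dual_lt_of_mem_extremePoints_convexHull {s : Set E} (hs : s.Finite)
    {x : E} (hx : x ∈ (convexHull ℝ s).extremePoints ℝ) :
    ∃ f : StrongDual ℝ E, ∀ y ∈ s, y ≠ x → f y < f x := by
  obtain ⟨f, u, hfu, hux⟩ := geometric_hahn_banach_closed_point (convex_convexHull ℝ _)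
    ((hs.subset Set.sdiff_subset).isClosed_convexHull ℝ)
    (notMem_convexHull_sdiff_of_mem_extremePoints_convexHull hx)
  exact ⟨f, fun y hy hyx ↦ (hfu y (subset_convexHull ℝ _ ⟨hy, hyx⟩)).trans hux⟩

end Separation

section ExpSum

variable {ι : Type*} {s : Finset ι} {v c : ι → ℝ} {α : ι}

theorem tendsto_sum_mul_exp_mul_sub_atTop (hα : α ∈ s) (hmax : ∀ γ ∈ s, γ ≠ α → c γ < c α) :
    Tendsto (fun t ↦ ∑ γ ∈ s, v γ * exp (t * (c γ - c α))) atTop (𝓝 (v α)) := by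
  classical
  have hrest : Tendsto (fun t ↦ ∑ γ ∈ s.erase α, v γ * exp (t * (c γ - c α))) atTop (𝓝 0) := by
    simpa using tendsto_finsetSum (s.erase α) fun γ hγ ↦
      (tendsto_exp_atBot.comp <| tendsto_id.atTop_mul_const_of_neg <| sub_neg.2 <|
        hmax γ (Finset.mem_of_mem_erase hγ) (Finset.ne_of_mem_erase hγ)).const_mul (v γ)
  simpa [← Finset.add_sum_erase s _ hα] using hrest.const_add (v α)

theorem coeff_nonneg_of_forall_sum_mul_exp_nonneg (hα : α ∈ s)
    (hmax : ∀ γ ∈ s, γ ≠ α → c γ < c α) (hnn : ∀ t, 0 ≤ ∑ γ ∈ s, v γ * exp (t * c γ)) :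
    0 ≤ v α := by
  have hshift (t : ℝ) : ∑ γ ∈ s, v γ * exp (t * (c γ - c α))
      = exp (-(t * c α)) * ∑ γ ∈ s, v γ * exp (t * c γ) := by
    rw [Finset.mul_sum]
    refine Finset.sum_congr rfl fun γ _ ↦ ?_
    rw [mul_sub, sub_eq_neg_add, exp_add]
    ring
  exact ge_of_tendsto' (tendsto_sum_mul_exp_mul_sub_atTop hα hmax)
    fun t ↦ hshift t ▸ mul_nonneg (exp_pos _).le (hnn t)

end ExpSum

/-- If an exponential sum supported on a finite set `A` is nonnegative on `ℝⁿ`,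
then the coefficient of every extreme point of `conv(A)` is nonnegative. -/
theorem coeff_nonneg_of_extremePoint {n : ℕ}
    (A : Finset (Fin n → ℝ)) (v : (Fin n → ℝ) → ℝ)
    (hnn : ∀ x : Fin n → ℝ, 0 ≤ ∑ γ ∈ A, v γ * Real.exp (∑ i, x i * γ i))
    (α₀ : Fin n → ℝ) (hα₀A : α₀ ∈ A)
    (hext : α₀ ∈ Set.extremePoints ℝ (convexHull ℝ (A : Set (Fin n → ℝ)))) :
    0 ≤ v α₀ := by
  obtain ⟨f, hf⟩ := A.finite_toSet.exists_dual_lt_of_mem_extremePoints_convexHull hext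
  set w : Fin n → ℝ := fun i ↦ f fun j ↦ if i = j then 1 else 0
  have hray (t : ℝ) (γ : Fin n → ℝ) : ∑ i, (t • w) i * γ i = t * f γ := by
    rw [← f.coe_coe, LinearMap.pi_apply_eq_sum_univ, Finset.mul_sum]
    refine Finset.sum_congr rfl fun i _ ↦ ?_
    simp only [Pi.smul_apply, smul_eq_mul, ContinuousLinearMap.coe_coe, w]
    ring
  refine coeff_nonneg_of_forall_sum_mul_exp_nonneg hα₀A hf fun t ↦ ?_
  simpa only [hray] using hnn (t • w)
end

section
/- Let A⁺, A⁻ ⊆ ℝⁿ be disjoint finite sets with A⁺ ≠ ∅ and A⁻ ≠ ∅, set A = A⁺ ∪ A⁻, and let c ∈ C_{(A⁺,A⁻)}. Then there exist vectors c^{(β)} : A → ℝ indexed by β ∈ A⁻ such that (1) c = ∑_{β∈A⁻} c^{(β)}; (2) for every β ∈ A⁻ the exponential sum f_{c^{(β)}} is nonnegative on ℝⁿ and c^{(β)}_α ≥ 0 for all α ∈ A⁺; and (3) c^{(β)}_γ = 0 for all γ ∈ A⁻ with γ ≠ β. -/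
/-! Every summand of a SAGE certificate is an AGE vector: its exponential sum is nonnegative and it
has at most one negative coefficient. If two AGE vectors have coefficients of opposite signs at
some exponent `p`, a nonnegative combination of them cancels the coefficient at `p` and is still
AGE, since `p` is the negative coefficient of one of the two. Repeating this pairwise cancellation
exponent by exponent, every summand acquires the sign pattern of `c` (nonnegative on `A⁺`,
nonpositive on `A⁻`) while the total is unchanged. Then the only negative coefficient of a summand
lies in `A⁻`, and grouping the summands by it gives the decomposition. -/

open Finset

/-- The exponential sum with support `A` and coefficient vector `v`. -/
noncomputable def expSum {n : ℕ} (A : Finset (Fin n → ℝ)) (v : (Fin n → ℝ) → ℝ)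
    (x : Fin n → ℝ) : ℝ :=
  ∑ γ ∈ A, v γ * Real.exp (∑ i, x i * γ i)

/-- The signed SONC (= SAGE) cone `C_{(A⁺,A⁻)}`: coefficient vectors with the prescribed
sign pattern that are finite sums of vectors with at most one negative entry, each inducing
a nonnegative exponential sum. -/
def InSAGE {n : ℕ} (Ap An : Finset (Fin n → ℝ)) (c : (Fin n → ℝ) → ℝ) : Prop :=
  (∀ α ∈ Ap, 0 ≤ c α) ∧ (∀ β ∈ An, c β ≤ 0) ∧
  ∃ (m : ℕ) (d : Fin m → (Fin n → ℝ) → ℝ),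
    (∀ γ ∈ Ap ∪ An, c γ = ∑ i, d i γ) ∧
    (∀ i, ∀ γ₁ ∈ Ap ∪ An, ∀ γ₂ ∈ Ap ∪ An, d i γ₁ < 0 → d i γ₂ < 0 → γ₁ = γ₂) ∧
    (∀ i, ∀ x : Fin n → ℝ, 0 ≤ expSum (Ap ∪ An) (d i) x)

theorem Multiset.sum_fiberwise_of_maps_to {M ι : Type*} [AddCommMonoid M] [DecidableEq ι]
    {s : Multiset M} {I : Finset ι} {b : M → ι} (h : ∀ x ∈ s, b x ∈ I) :
    ∑ i ∈ I, (s.filter (b · = i)).sum = s.sum := by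
  induction s using Multiset.induction_on with
  | empty => simp
  | cons a s ih =>
    rw [Multiset.forall_mem_cons] at h
    simp only [Multiset.filter_cons, Multiset.sum_add, apply_ite Multiset.sum,
      Multiset.sum_singleton, Multiset.sum_zero, Finset.sum_add_distrib, Finset.sum_ite_eq,
      if_pos h.1, ih h.2, Multiset.sum_cons]

def SignCompatible {E : Type*} (T : Finset (E × ℝ)) (f : E → ℝ) : Prop :=
  ∀ q ∈ T, 0 ≤ q.2 * f q.1

namespace SignCompatible

variable {E : Type*} {T : Finset (E × ℝ)} {f g : E → ℝ}

theorem add (hf : SignCompatible T f) (hg : SignCompatible T g) : SignCompatible T (f + g) :=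
  fun q hq => by simpa only [Pi.add_apply, mul_add] using add_nonneg (hf q hq) (hg q hq)

theorem smul (hf : SignCompatible T f) {t : ℝ} (ht : 0 ≤ t) : SignCompatible T (t • f) :=
  fun q hq => by
    simpa only [Pi.smul_apply, smul_eq_mul, mul_left_comm] using mul_nonneg ht (hf q hq)

end SignCompatible

section AGE

variable {n : ℕ}

theorem expSum_add (A : Finset (Fin n → ℝ)) (f g : (Fin n → ℝ) → ℝ) (x : Fin n → ℝ) :
    expSum A (f + g) x = expSum A f x + expSum A g x := by
  simp only [expSum, Pi.add_apply, add_mul, Finset.sum_add_distrib]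

theorem expSum_smul (A : Finset (Fin n → ℝ)) (t : ℝ) (f : (Fin n → ℝ) → ℝ) (x : Fin n → ℝ) :
    expSum A (t • f) x = t * expSum A f x := by
  simp only [expSum, Pi.smul_apply, smul_eq_mul, Finset.mul_sum, mul_assoc]

variable {A : Finset (Fin n → ℝ)} {f g : (Fin n → ℝ) → ℝ} {p : Fin n → ℝ}

def IsAGE (A : Finset (Fin n → ℝ)) (f : (Fin n → ℝ) → ℝ) : Prop :=
  (∀ x, 0 ≤ expSum A f x) ∧ ∀ γ₁ ∈ A, ∀ γ₂ ∈ A, f γ₁ < 0 → f γ₂ < 0 → γ₁ = γ₂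

theorem IsAGE.smul (hf : IsAGE A f) {t : ℝ} (ht : 0 ≤ t) : IsAGE A (t • f) := by
  refine ⟨fun x => ?_, fun γ₁ h₁ γ₂ h₂ hn₁ hn₂ => hf.2 γ₁ h₁ γ₂ h₂ ?_ ?_⟩
  · rw [expSum_smul]
    exact mul_nonneg ht (hf.1 x)
  · exact neg_of_mul_neg_right hn₁ ht
  · exact neg_of_mul_neg_right hn₂ ht

/-- If the entry at `p` cancels in `f + g`, then `p` was the negative entry of `f` or of `g`,
so every negative entry of `f + g` is a negative entry of the other summand. -/
theorem IsAGE.add_of_cancel (hp : p ∈ A) (hf : IsAGE A f) (hg : IsAGE A g) (hne : f p ≠ 0)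
    (hsum : f p + g p = 0) : IsAGE A (f + g) := by
  have neg_of_cancel : ∀ {u v : (Fin n → ℝ) → ℝ}, IsAGE A u → u p < 0 → u p + v p = 0 →
      ∀ γ ∈ A, (u + v) γ < 0 → v γ < 0 := by
    intro u v hu hup huv γ hγ hneg
    have hγp : γ ≠ p := by rintro rfl; simp only [Pi.add_apply] at hneg; linarith
    have : 0 ≤ u γ := le_of_not_gt fun h => hγp (hu.2 γ hγ p hp h hup)
    simp only [Pi.add_apply] at hneg
    linarith
  refine ⟨fun x => by rw [expSum_add]; exact add_nonneg (hf.1 x) (hg.1 x), ?_⟩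
  intro γ₁ h₁ γ₂ h₂ hn₁ hn₂
  rcases hne.lt_or_gt with hfp | hfp
  · exact hg.2 γ₁ h₁ γ₂ h₂ (neg_of_cancel hf hfp hsum γ₁ h₁ hn₁)
      (neg_of_cancel hf hfp hsum γ₂ h₂ hn₂)
  · rw [add_comm] at hsum hn₁ hn₂
    have hgp : g p < 0 := by linarith
    exact hf.2 γ₁ h₁ γ₂ h₂ (neg_of_cancel hg hgp hsum γ₁ h₁ hn₁)
      (neg_of_cancel hg hgp hsum γ₂ h₂ hn₂)

theorem IsAGE.exists_add_smul_apply_eq_zero (hp : p ∈ A) (hf : IsAGE A f) (hg : IsAGE A g)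
    (hfg : f p * g p < 0) (hle : |f p| ≤ |g p|) :
    ∃ t : ℝ, 0 ≤ t ∧ t ≤ 1 ∧ IsAGE A (f + t • g) ∧ (f + t • g) p = 0 := by
  have hf0 : f p ≠ 0 := by rintro h; simp [h] at hfg
  have hg0 : g p ≠ 0 := by rintro h; simp [h] at hfg
  have hcancel : f p + |f p| / |g p| * g p = 0 := by
    rcases mul_neg_iff.1 hfg with ⟨hfp, hgp⟩ | ⟨hfp, hgp⟩
    · rw [abs_of_pos hfp, abs_of_neg hgp]; field_simp; ring
    · rw [abs_of_neg hfp, abs_of_pos hgp]; field_simp; ring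
  refine ⟨|f p| / |g p|, by positivity, div_le_one_of_le₀ hle (abs_nonneg _),
    hf.add_of_cancel hp (hg.smul (by positivity)) hf0 hcancel, hcancel⟩

end AGE

section Elimination

variable {n : ℕ} {A : Finset (Fin n → ℝ)} {T : Finset ((Fin n → ℝ) × ℝ)}
  {p : Fin n → ℝ}

theorem exists_split_apply_eq_zero {f g : (Fin n → ℝ) → ℝ} (hp : p ∈ A)
    (hf : IsAGE A f ∧ SignCompatible T f) (hg : IsAGE A g ∧ SignCompatible T g)
    (hfg : f p * g p < 0) :
    ∃ h r, h + r = f + g ∧ (IsAGE A h ∧ SignCompatible T h) ∧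
      (IsAGE A r ∧ SignCompatible T r) ∧ h p = 0 := by
  wlog hle : |f p| ≤ |g p| generalizing f g
  · obtain ⟨h, r, hsum, hh, hr, hhp⟩ := this hg hf (by rwa [mul_comm]) (le_of_not_ge hle)
    exact ⟨h, r, hsum.trans (add_comm g f), hh, hr, hhp⟩
  obtain ⟨t, ht₀, ht₁, hage, hzero⟩ := hf.1.exists_add_smul_apply_eq_zero hp hg.1 hfg hle
  have ht₁' : 0 ≤ 1 - t := sub_nonneg.2 ht₁
  exact ⟨f + t • g, (1 - t) • g, by module, ⟨hage, hf.2.add (hg.2.smul ht₀)⟩,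
    ⟨hg.1.smul ht₁', hg.2.smul ht₁'⟩, hzero⟩

/-- A summand of the wrong sign at `p` is paired with one of the right sign (which exists because
the total has the right sign), and the pair is replaced by two summands, one vanishing at `p`. -/
theorem exists_countP_ne_zero_lt {σ : ℝ} (hp : p ∈ A) {s : Multiset ((Fin n → ℝ) → ℝ)}
    (hs : ∀ f ∈ s, IsAGE A f ∧ SignCompatible T f) (hsum : 0 ≤ σ * s.sum p)
    {g : (Fin n → ℝ) → ℝ} (hg : g ∈ s) (hgp : σ * g p < 0) :
    ∃ s' : Multiset ((Fin n → ℝ) → ℝ), s'.sum = s.sum ∧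
      (∀ f ∈ s', IsAGE A f ∧ SignCompatible T f) ∧
      s'.countP (· p ≠ 0) < s.countP (· p ≠ 0) := by
  obtain ⟨f, hf, hfp⟩ : ∃ f ∈ s, 0 < σ * f p := by
    by_contra! hle
    obtain ⟨s₁, rfl⟩ := Multiset.exists_cons_of_mem hg
    have : σ * s₁.sum p ≤ 0 := Multiset.sum_induction (fun u => σ * u p ≤ 0) s₁
      (fun u v hu hv => by simp only [Pi.add_apply, mul_add]; linarith) (by simp)
      (fun u hu => hle u (Multiset.mem_cons_of_mem hu))
    rw [Multiset.sum_cons, Pi.add_apply, mul_add] at hsum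
    linarith
  obtain ⟨s₁, rfl⟩ := Multiset.exists_cons_of_mem hf
  obtain ⟨s₀, rfl⟩ := Multiset.exists_cons_of_mem
    ((Multiset.mem_cons.1 hg).resolve_left (by rintro rfl; linarith))
  have hfg : f p * g p < 0 := by
    have hσ : σ * f p * (σ * g p) = σ ^ 2 * (f p * g p) := by ring
    exact neg_of_mul_neg_right (hσ ▸ mul_neg_of_pos_of_neg hfp hgp) (sq_nonneg σ)
  obtain ⟨h, r, hhr, hh, hr, hhp⟩ := exists_split_apply_eq_zero hp
    (hs f (by simp)) (hs g (by simp)) hfg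
  refine ⟨h ::ₘ r ::ₘ s₀, ?_, ?_, ?_⟩
  · simp only [Multiset.sum_cons, ← add_assoc, hhr]
  · simp only [Multiset.forall_mem_cons] at hs ⊢
    exact ⟨hh, hr, hs.2.2⟩
  · have hf0 : f p ≠ 0 := by rintro h; simp [h] at hfp
    have hg0 : g p ≠ 0 := by rintro h; simp [h] at hgp
    simp only [Multiset.countP_cons, hhp, ne_eq, not_true_eq_false, if_false, hf0, hg0,
      not_false_eq_true, if_true]
    split_ifs <;> omega

theorem exists_signCompatible_insert (hp : p ∈ A) (σ : ℝ) (s : Multiset ((Fin n → ℝ) → ℝ))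
    (hs : ∀ f ∈ s, IsAGE A f ∧ SignCompatible T f) (hsum : 0 ≤ σ * s.sum p) :
    ∃ s' : Multiset ((Fin n → ℝ) → ℝ), s'.sum = s.sum ∧
      ∀ f ∈ s', IsAGE A f ∧ SignCompatible (insert (p, σ) T) f := by
  induction hk : s.countP (· p ≠ 0) using Nat.strong_induction_on generalizing s with
  | _ k ih =>
  by_cases hsigned : ∀ f ∈ s, 0 ≤ σ * f p
  · exact ⟨s, rfl, fun f hf => ⟨(hs f hf).1, Finset.forall_mem_insert _ _ _ |>.2
      ⟨hsigned f hf, (hs f hf).2⟩⟩⟩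
  push Not at hsigned
  obtain ⟨g, hg, hgp⟩ := hsigned
  obtain ⟨s', hs'sum, hs', hlt⟩ := exists_countP_ne_zero_lt hp hs hsum hg hgp
  obtain ⟨s'', hs''sum, hs''⟩ := ih _ (hk ▸ hlt) s' hs' (hs'sum ▸ hsum) rfl
  exact ⟨s'', hs''sum.trans hs'sum, hs''⟩

theorem exists_signCompatible (T : Finset ((Fin n → ℝ) × ℝ)) (hT : ∀ q ∈ T, q.1 ∈ A)
    (s : Multiset ((Fin n → ℝ) → ℝ)) (hs : ∀ f ∈ s, IsAGE A f)
    (hsum : ∀ q ∈ T, 0 ≤ q.2 * s.sum q.1) :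
    ∃ s' : Multiset ((Fin n → ℝ) → ℝ), s'.sum = s.sum ∧
      ∀ f ∈ s', IsAGE A f ∧ SignCompatible T f := by
  induction T using Finset.induction_on with
  | empty => exact ⟨s, rfl, fun f hf => ⟨hs f hf, by simp [SignCompatible]⟩⟩
  | insert q T _ ih =>
    rw [Finset.forall_mem_insert] at hT hsum
    obtain ⟨s', hs'sum, hs'⟩ := ih hT.2 hsum.2
    obtain ⟨s'', hs''sum, hs''⟩ :=
      exists_signCompatible_insert hT.1 q.2 s' hs' (hs'sum ▸ hsum.1)
    exact ⟨s'', hs''sum.trans hs'sum, hs''⟩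

end Elimination

/-- Once every summand is nonnegative on `Ap` and nonpositive on `An`, its only possible negative
entry lies in `An`; grouping the summands by that entry gives one summand per `β ∈ An`. -/
theorem exists_sum_eq_fiberwise {n : ℕ} {Ap An : Finset (Fin n → ℝ)} (hAn : An.Nonempty)
    (s : Multiset ((Fin n → ℝ) → ℝ))
    (hs : ∀ f ∈ s, IsAGE (Ap ∪ An) f ∧ (∀ α ∈ Ap, 0 ≤ f α) ∧ ∀ β ∈ An, f β ≤ 0) :
    ∃ d : (Fin n → ℝ) → ((Fin n → ℝ) → ℝ), ∑ β ∈ An, d β = s.sum ∧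
      ∀ β ∈ An, (∀ x, 0 ≤ expSum (Ap ∪ An) (d β) x) ∧ (∀ α ∈ Ap, 0 ≤ d β α) ∧
        ∀ γ ∈ An, γ ≠ β → d β γ = 0 := by
  classical
  have hneg : ∀ f : (Fin n → ℝ) → ℝ, ∃ β ∈ An,
      IsAGE (Ap ∪ An) f → ∀ γ ∈ An, f γ < 0 → γ = β := by
    intro f
    by_cases h : ∃ β ∈ An, f β < 0
    · obtain ⟨β, hβ, hfβ⟩ := h
      exact ⟨β, hβ, fun hf γ hγ hfγ =>
        hf.2 γ (mem_union_right _ hγ) β (mem_union_right _ hβ) hfγ hfβ⟩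
    · push Not at h
      exact ⟨hAn.choose, hAn.choose_spec, fun _ γ hγ hfγ => absurd (h γ hγ) hfγ.not_ge⟩
  choose b hbAn hb using hneg
  refine ⟨fun β => (s.filter (b · = β)).sum,
    Multiset.sum_fiberwise_of_maps_to fun f _ => hbAn f, fun β _ => ⟨?_, ?_, ?_⟩⟩
  · exact Multiset.sum_induction (fun u : (Fin n → ℝ) → ℝ => ∀ x, 0 ≤ expSum (Ap ∪ An) u x) _
      (fun u v hu hv x => by rw [expSum_add]; exact add_nonneg (hu x) (hv x))
      (fun x => by simp [expSum]) (fun f hf => (hs f (Multiset.mem_filter.1 hf).1).1.1)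
  · intro α hα
    exact Multiset.sum_induction (fun u : (Fin n → ℝ) → ℝ => 0 ≤ u α) _
      (fun u v hu hv => add_nonneg hu hv) le_rfl
      (fun f hf => (hs f (Multiset.mem_filter.1 hf).1).2.1 α hα)
  · intro γ hγ hγβ
    refine Multiset.sum_induction (fun u : (Fin n → ℝ) → ℝ => u γ = 0) _
      (fun u v hu hv => by rw [Pi.add_apply, hu, hv, add_zero]) rfl fun f hf => ?_
    obtain ⟨hfs, rfl⟩ := Multiset.mem_filter.1 hf
    exact le_antisymm ((hs f hfs).2.2 γ hγ) (le_of_not_gt fun hfγ =>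
      hγβ (hb f (hs f hfs).1 γ hγ hfγ))

theorem sage_decomposition_general {n : ℕ}
    (Ap An : Finset (Fin n → ℝ))
    (hAn : An.Nonempty)
    (c : (Fin n → ℝ) → ℝ) (hc : InSAGE Ap An c) :
    ∃ d : (Fin n → ℝ) → ((Fin n → ℝ) → ℝ),
      (∀ γ ∈ Ap ∪ An, c γ = ∑ β ∈ An, d β γ) ∧
      (∀ β ∈ An, (∀ x : Fin n → ℝ, 0 ≤ expSum (Ap ∪ An) (d β) x) ∧ ∀ α ∈ Ap, 0 ≤ d β α) ∧
      (∀ β ∈ An, ∀ γ ∈ An, γ ≠ β → d β γ = 0) := by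
  obtain ⟨hcAp, hcAn, m, d, hcd, hdneg, hdnonneg⟩ := hc
  have hc : ∀ γ ∈ Ap ∪ An, c γ = (univ.val.map d).sum γ := fun γ hγ => by
    rw [hcd γ hγ, ← Finset.sum_apply]; rfl
  let T : Finset ((Fin n → ℝ) × ℝ) := Ap ×ˢ {1} ∪ An ×ˢ {-1}
  have hT : ∀ q ∈ T, q.1 ∈ Ap ∪ An ∧ 0 ≤ q.2 * c q.1 := by
    rintro ⟨γ, σ⟩ hq
    simp only [T, mem_union, mem_product, mem_singleton] at hq
    rcases hq with ⟨hγ, rfl⟩ | ⟨hγ, rfl⟩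
    · exact ⟨mem_union_left _ hγ, by simpa using hcAp γ hγ⟩
    · exact ⟨mem_union_right _ hγ, by simpa using hcAn γ hγ⟩
  obtain ⟨s, hs, hsT⟩ := exists_signCompatible T (fun q hq => (hT q hq).1) (univ.val.map d)
    (by simpa using fun i => ⟨hdnonneg i, hdneg i⟩)
    (fun q hq => hc q.1 (hT q hq).1 ▸ (hT q hq).2)
  obtain ⟨e, he, hesigns⟩ := exists_sum_eq_fiberwise hAn s fun f hf =>
    ⟨(hsT f hf).1, fun α hα => by simpa [T, hα] using (hsT f hf).2 (α, 1),
      fun β hβ => by simpa [T, hβ] using (hsT f hf).2 (β, -1)⟩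
  refine ⟨e, fun γ hγ => by rw [hc γ hγ, ← hs, ← he, Finset.sum_apply],
    fun β hβ => ⟨(hesigns β hβ).1, (hesigns β hβ).2.1⟩, fun β hβ => (hesigns β hβ).2.2⟩

/-- Every element of the signed SONC cone decomposes into AGE summands, one for
each negative exponent. -/
theorem sage_decomposition {n : ℕ}
    (Ap An : Finset (Fin n → ℝ)) (hdisj : Disjoint Ap An)
    (hAp : Ap.Nonempty) (hAn : An.Nonempty)
    (c : (Fin n → ℝ) → ℝ) (hc : InSAGE Ap An c) :
    ∃ d : (Fin n → ℝ) → ((Fin n → ℝ) → ℝ),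
      (∀ γ ∈ Ap ∪ An, c γ = ∑ β ∈ An, d β γ) ∧
      (∀ β ∈ An, (∀ x : Fin n → ℝ, 0 ≤ expSum (Ap ∪ An) (d β) x) ∧ ∀ α ∈ Ap, 0 ≤ d β α) ∧
      (∀ β ∈ An, ∀ γ ∈ An, γ ≠ β → d β γ = 0) :=
  sage_decomposition_general Ap An hAn c hc
end

section
/- Let A⁺, A⁻ ⊆ ℝⁿ be disjoint finite sets with A⁺ ≠ ∅ and A⁻ ≠ ∅, and set A = A⁺ ∪ A⁻. For each β ∈ A⁻ let C^A_{(A⁺,{β})} denote the set of vectors in ℝ^A that vanish on A⁻ \ {β} and whose restriction to A⁺ ∪ {β} belongs to C_{(A⁺,{β})}. Then the dual cone of C_{(A⁺,A⁻)} equals the intersection over β ∈ A⁻ of the dual cones of C^A_{(A⁺,{β})}. -/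
open Finset

/-- `C^A_{(A⁺,{β})}`: vectors on `A = A⁺ ∪ A⁻` vanishing on `A⁻ \ {β}` whose restriction to
`A⁺ ∪ {β}` lies in `C_{(A⁺,{β})}`. -/
def SAGEExt {n : ℕ} (Ap An : Finset (Fin n → ℝ)) (β : Fin n → ℝ) :
    Set ((Fin n → ℝ) → ℝ) :=
  {c | (∀ γ ∈ An, γ ≠ β → c γ = 0) ∧ InSAGE Ap {β} c}

/-- The dual cone of a set `K` of coefficient vectors on the support `A`, with respect to the
natural duality pairing. -/
def dualCone {n : ℕ} (A : Finset (Fin n → ℝ)) (K : Set ((Fin n → ℝ) → ℝ)) :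
    Set ((Fin n → ℝ) → ℝ) :=
  {v | ∀ c ∈ K, 0 ≤ ∑ γ ∈ A, v γ * c γ}

/-! Each summand of a SAGE decomposition of `c` lies in an AGE cone (nonnegative except possibly
at one point `γ`), and summands with the same `γ` can be merged, so `c = ∑_{γ ∈ A} D_γ` with
`D_γ ∈ AGE(γ)`. At each point `p` in turn, adding nonnegative multiples of `D_p` to the other
parts (and shrinking `D_p` accordingly) makes all parts have the sign of `c_p` at `p`, without
disturbing the points already treated. Afterwards `D_α` (`α ∈ A⁺`) is nonnegative and vanishes
on `A⁻`, and `D_β` (`β ∈ A⁻`) vanishes on `A⁻ \ {β}`; so `c` is a sum of elements of the cones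
`C^A_{(A⁺,{β})}`, and a functional nonnegative on each of them is nonnegative on `c`. Conversely
each `C^A_{(A⁺,{β})}` is contained in `C_{(A⁺,A⁻)}`. -/

namespace SAGE

variable {n : ℕ} {A B : Finset (Fin n → ℝ)}

lemma expSum_add (d e : (Fin n → ℝ) → ℝ) (x : Fin n → ℝ) :
    expSum A (d + e) x = expSum A d x + expSum A e x := by
  simp only [expSum, Pi.add_apply, add_mul, sum_add_distrib]

lemma expSum_smul (t : ℝ) (d : (Fin n → ℝ) → ℝ) (x : Fin n → ℝ) :
    expSum A (t • d) x = t * expSum A d x := by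
  simp only [expSum, Pi.smul_apply, smul_eq_mul, mul_sum, mul_assoc]

lemma expSum_eq_of_subset (hBA : B ⊆ A) {d : (Fin n → ℝ) → ℝ}
    (hd : ∀ γ ∈ A, γ ∉ B → d γ = 0) (x : Fin n → ℝ) : expSum A d x = expSum B d x :=
  (sum_subset hBA fun γ hγA hγB => by rw [hd γ hγA hγB, zero_mul]).symm

def ageCone (A : Finset (Fin n → ℝ)) (γ : Fin n → ℝ) : PointedCone ℝ ((Fin n → ℝ) → ℝ) where
  carrier := {d | (∀ δ ∈ A, δ ≠ γ → 0 ≤ d δ) ∧ ∀ x, 0 ≤ expSum A d x}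
  add_mem' {d e} hd he := ⟨fun δ hδ hne => add_nonneg (hd.1 δ hδ hne) (he.1 δ hδ hne),
    fun x => by rw [expSum_add]; exact add_nonneg (hd.2 x) (he.2 x)⟩
  zero_mem' := ⟨fun _ _ _ => le_rfl, fun x => by simp [expSum]⟩
  smul_mem' t d hd := ⟨fun δ hδ hne => mul_nonneg t.2 (hd.1 δ hδ hne),
    fun x => by rw [← Nonneg.coe_smul, expSum_smul]; exact mul_nonneg t.2 (hd.2 x)⟩

variable {γ : Fin n → ℝ} {d : (Fin n → ℝ) → ℝ}

lemma exists_mem_ageCone (hA : A.Nonempty)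
    (hneg : ∀ γ₁ ∈ A, ∀ γ₂ ∈ A, d γ₁ < 0 → d γ₂ < 0 → γ₁ = γ₂)
    (hexp : ∀ x, 0 ≤ expSum A d x) : ∃ γ ∈ A, d ∈ ageCone A γ := by
  by_cases h : ∃ γ ∈ A, d γ < 0
  · obtain ⟨γ, hγ, hdγ⟩ := h
    exact ⟨γ, hγ, fun δ hδ hne => not_lt.mp fun hdδ => hne (hneg δ hδ γ hγ hdδ hdγ), hexp⟩
  · push Not at h
    obtain ⟨γ, hγ⟩ := hA
    exact ⟨γ, hγ, fun δ hδ _ => h δ hδ, hexp⟩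

lemma mem_ageCone_of_nonneg (hd : d ∈ ageCone A γ) (hnonneg : ∀ δ ∈ A, 0 ≤ d δ)
    (γ' : Fin n → ℝ) : d ∈ ageCone A γ' :=
  ⟨fun δ hδ _ => hnonneg δ hδ, hd.2⟩

lemma exists_ageCone_family_sum {m : ℕ} {d : Fin m → (Fin n → ℝ) → ℝ}
    (hd : ∀ i, ∃ γ ∈ A, d i ∈ ageCone A γ) :
    ∃ D : (Fin n → ℝ) → (Fin n → ℝ) → ℝ,
      (∀ γ ∈ A, D γ ∈ ageCone A γ) ∧ ∑ γ ∈ A, D γ = ∑ i, d i := by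
  choose k hkA hk using hd
  refine ⟨fun γ => ∑ i with k i = γ, d i, fun γ _ => ?_,
    sum_fiberwise_of_maps_to (fun i _ => hkA i) d⟩
  exact Submodule.sum_mem _ fun i hi => (mem_filter.mp hi).2 ▸ hk i

variable {D : (Fin n → ℝ) → (Fin n → ℝ) → ℝ} {p q : Fin n → ℝ}

def SameSignAt (A : Finset (Fin n → ℝ)) (D : (Fin n → ℝ) → (Fin n → ℝ) → ℝ)
    (q : Fin n → ℝ) : Prop :=
  (∀ γ ∈ A, 0 ≤ D γ q) ∨ ∀ γ ∈ A, D γ q ≤ 0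

lemma SameSignAt.nonneg (h : SameSignAt A D q) (hsum : 0 ≤ ∑ γ ∈ A, D γ q) :
    ∀ γ ∈ A, 0 ≤ D γ q := by
  rcases h with h | h
  · exact h
  · exact fun γ hγ => ((sum_eq_zero_iff_of_nonpos h).mp (le_antisymm (sum_nonpos h) hsum) γ hγ).ge

lemma SameSignAt.nonpos (h : SameSignAt A D q) (hsum : ∑ γ ∈ A, D γ q ≤ 0) :
    ∀ γ ∈ A, D γ q ≤ 0 := by
  rcases h with h | h
  · exact fun γ hγ => ((sum_eq_zero_iff_of_nonneg h).mp (le_antisymm hsum (sum_nonneg h)) γ hγ).le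
  · exact h

noncomputable def rebalanceScale (A : Finset (Fin n → ℝ)) (D : (Fin n → ℝ) → (Fin n → ℝ) → ℝ)
    (p : Fin n → ℝ) : ℝ :=
  max (∑ γ ∈ A.erase p, D γ p) (-D p p)

/-- Redistributes `D p`, the only part that may be negative at `p`, over the other parts in
proportion to their coefficients at `p`. If the total at `p` is nonnegative, `D p` is used up
(the scale is `∑_{γ ≠ p} D γ p`); otherwise the other parts are cleared at `p` (the scale is
`-D p p`). Either way every part ends up with the sign of the total at `p`. -/
noncomputable def rebalance (A : Finset (Fin n → ℝ)) (D : (Fin n → ℝ) → (Fin n → ℝ) → ℝ)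
    (p : Fin n → ℝ) : (Fin n → ℝ) → (Fin n → ℝ) → ℝ := fun γ =>
  D γ + ((if γ = p then -∑ δ ∈ A.erase p, D δ p else D γ p) / rebalanceScale A D p) • D p

lemma rebalance_of_ne (h : γ ≠ p) :
    rebalance A D p γ = D γ + (D γ p / rebalanceScale A D p) • D p := by
  simp only [rebalance, if_neg h]

lemma rebalance_self :
    rebalance A D p p = (1 - (∑ δ ∈ A.erase p, D δ p) / rebalanceScale A D p) • D p := by
  simp only [rebalance, ↓reduceIte, neg_div, sub_eq_add_neg, add_smul, one_smul]

lemma sum_rebalance (hp : p ∈ A) : ∑ γ ∈ A, rebalance A D p γ = ∑ γ ∈ A, D γ := by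
  have hweights : ∑ γ ∈ A, (if γ = p then -∑ δ ∈ A.erase p, D δ p else D γ p) = 0 := by
    rw [← add_sum_erase A _ hp, if_pos rfl,
      sum_congr rfl fun γ hγ => if_neg (ne_of_mem_erase hγ), neg_add_cancel]
  simp only [rebalance, sum_add_distrib, ← sum_smul, ← sum_div, hweights, zero_div, zero_smul,
    add_zero]

lemma rebalanceScale_pos (hpp : D p p < 0) : 0 < rebalanceScale A D p :=
  lt_max_of_lt_right (neg_pos.mpr hpp)

lemma rebalance_apply_self_of_ne (hpp : D p p < 0) (hγ : γ ≠ p) :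
    rebalance A D p γ p = D γ p / rebalanceScale A D p * (rebalanceScale A D p + D p p) := by
  have hs := (rebalanceScale_pos (A := A) hpp).ne'
  simp only [rebalance_of_ne hγ, Pi.add_apply, Pi.smul_apply, smul_eq_mul]
  field_simp

lemma rebalance_mem_ageCone (hD : ∀ γ ∈ A, D γ ∈ ageCone A γ) (hp : p ∈ A) (hpp : D p p < 0) :
    ∀ γ ∈ A, rebalance A D p γ ∈ ageCone A γ := by
  have hs := rebalanceScale_pos (A := A) hpp
  intro γ hγ
  by_cases hγp : γ = p
  · subst hγp
    rw [rebalance_self]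
    refine PointedCone.smul_mem _ ?_ (hD γ hγ)
    rw [sub_nonneg]
    exact div_le_one_of_le₀ (le_max_left _ _) hs.le
  · have hw : 0 ≤ D γ p / rebalanceScale A D p :=
      div_nonneg ((hD γ hγ).1 p hp (Ne.symm hγp)) hs.le
    refine ⟨fun δ hδ hδγ => ?_, fun x => ?_⟩
    · by_cases hδp : δ = p
      · subst hδp
        rw [rebalance_apply_self_of_ne hpp hγp]
        have : -D δ δ ≤ rebalanceScale A D δ := le_max_right _ _
        exact mul_nonneg hw (by linarith)
      · rw [rebalance_of_ne hγp]
        exact add_nonneg ((hD γ hγ).1 δ hδ hδγ) (mul_nonneg hw ((hD p hp).1 δ hδ hδp))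
    · rw [rebalance_of_ne hγp, expSum_add, expSum_smul]
      exact add_nonneg ((hD γ hγ).2 x) (mul_nonneg hw ((hD p hp).2 x))

lemma sameSignAt_rebalance_self (hD : ∀ γ ∈ A, D γ ∈ ageCone A γ) (hp : p ∈ A)
    (hpp : D p p < 0) : SameSignAt A (rebalance A D p) p := by
  have hs := rebalanceScale_pos (A := A) hpp
  set S := ∑ γ ∈ A.erase p, D γ p
  rcases le_total (-D p p) S with hS | hS
  · have hsS : rebalanceScale A D p = S := max_eq_left hS
    refine Or.inl fun γ hγ => ?_
    by_cases hγp : γ = p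
    · subst hγp
      rw [rebalance_self, hsS, div_self (by linarith), sub_self, zero_smul, Pi.zero_apply]
    · exact (rebalance_mem_ageCone hD hp hpp γ hγ).1 p hp (Ne.symm hγp)
  · have hsN : rebalanceScale A D p = -D p p := max_eq_right hS
    refine Or.inr fun γ hγ => ?_
    by_cases hγp : γ = p
    · subst hγp
      rw [rebalance_self, Pi.smul_apply, smul_eq_mul]
      refine mul_nonpos_of_nonneg_of_nonpos ?_ hpp.le
      rw [sub_nonneg]
      exact div_le_one_of_le₀ (le_max_left _ _) hs.le
    · rw [rebalance_apply_self_of_ne hpp hγp, hsN, neg_add_cancel, mul_zero]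

lemma SameSignAt.rebalance (h : SameSignAt A D q) (hD : ∀ γ ∈ A, D γ ∈ ageCone A γ)
    (hp : p ∈ A) (hpp : D p p < 0) (hq : q ∈ A) (hqp : q ≠ p) :
    SameSignAt A (rebalance A D p) q := by
  rcases h with h | h
  · refine Or.inl fun γ hγ => ?_
    by_cases hγq : γ = q
    · subst hγq
      rw [rebalance_of_ne hqp, Pi.add_apply, Pi.smul_apply, smul_eq_mul]
      have hw : 0 ≤ D γ p / rebalanceScale A D p :=
        div_nonneg ((hD γ hγ).1 p hp (Ne.symm hqp)) (rebalanceScale_pos hpp).le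
      exact add_nonneg (h γ hγ) (mul_nonneg hw (h p hp))
    · exact (rebalance_mem_ageCone hD hp hpp γ hγ).1 q hq (Ne.symm hγq)
  · have hpq : D p q = 0 := le_antisymm (h p hp) ((hD p hp).1 q hq hqp)
    refine Or.inr fun γ hγ => ?_
    simp only [SAGE.rebalance, Pi.add_apply, Pi.smul_apply, smul_eq_mul, hpq, mul_zero, add_zero]
    exact h γ hγ

lemma exists_sameSignAt (hD : ∀ γ ∈ A, D γ ∈ ageCone A γ) {P : Finset (Fin n → ℝ)} (hP : P ⊆ A) :
    ∃ D' : (Fin n → ℝ) → (Fin n → ℝ) → ℝ, (∀ γ ∈ A, D' γ ∈ ageCone A γ) ∧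
      ∑ γ ∈ A, D' γ = ∑ γ ∈ A, D γ ∧ ∀ q ∈ P, SameSignAt A D' q := by
  induction P using Finset.induction_on with
  | empty => exact ⟨D, hD, rfl, by simp⟩
  | insert p P hpP ih =>
    obtain ⟨D₁, hD₁, hsum₁, hsign₁⟩ := ih ((subset_insert p P).trans hP)
    have hp : p ∈ A := hP (mem_insert_self p P)
    by_cases hpp : D₁ p p < 0
    · refine ⟨rebalance A D₁ p, rebalance_mem_ageCone hD₁ hp hpp, (sum_rebalance hp).trans hsum₁,
        fun q hq => ?_⟩
      rcases mem_insert.mp hq with rfl | hq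
      · exact sameSignAt_rebalance_self hD₁ hp hpp
      · exact (hsign₁ q hq).rebalance hD₁ hp hpp (hP (mem_insert_of_mem hq))
          (ne_of_mem_of_not_mem hq hpP)
    · refine ⟨D₁, hD₁, hsum₁, fun q hq => ?_⟩
      rcases mem_insert.mp hq with rfl | hq
      · refine Or.inl fun γ hγ => ?_
        by_cases hγq : γ = q
        · subst hγq
          exact not_lt.mp hpp
        · exact (hD₁ γ hγ).1 q hp (Ne.symm hγq)
      · exact hsign₁ q hq

variable {Ap An : Finset (Fin n → ℝ)} {β : Fin n → ℝ} {c : (Fin n → ℝ) → ℝ}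

lemma mem_sageExt_of_mem_ageCone (hdisj : Disjoint Ap An) (hβ : β ∈ An)
    (hd : d ∈ ageCone (Ap ∪ An) β) (hAn : ∀ γ ∈ An, d γ ≤ 0) : d ∈ SAGEExt Ap An β := by
  have hvan : ∀ γ ∈ An, γ ≠ β → d γ = 0 := fun γ hγ hγβ =>
    le_antisymm (hAn γ hγ) (hd.1 γ (mem_union_right _ hγ) hγβ)
  have hAp : ∀ α ∈ Ap, 0 ≤ d α := fun α hα =>
    hd.1 α (mem_union_left _ hα) fun h => disjoint_left.mp hdisj hα (h ▸ hβ)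
  have hneg : ∀ γ ∈ Ap ∪ {β}, d γ < 0 → γ = β := fun γ hγ hdγ =>
    (mem_union.mp hγ).elim (fun h => absurd hdγ (not_lt.mpr (hAp γ h))) mem_singleton.mp
  refine ⟨hvan, hAp, fun γ hγ => mem_singleton.mp hγ ▸ hAn β hβ, 1, fun _ => d,
    fun γ _ => by simp, fun _ γ₁ h₁ γ₂ h₂ hd₁ hd₂ => (hneg γ₁ h₁ hd₁).trans (hneg γ₂ h₂ hd₂).symm,
    fun _ x => ?_⟩
  rw [← expSum_eq_of_subset (union_subset_union_right (singleton_subset_iff.mpr hβ))]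
  · exact hd.2 x
  · intro γ hγ hγβ
    rw [mem_union, not_or, mem_singleton] at hγβ
    exact hvan γ ((mem_union.mp hγ).resolve_left hγβ.1) hγβ.2

lemma inSAGE_of_mem_sageExt (hβ : β ∈ An) (hc : c ∈ SAGEExt Ap An β) : InSAGE Ap An c := by
  obtain ⟨hvan, hcAp, hcβ, m, d, hcd, hneg, hexp⟩ := hc
  set B := Ap ∪ {β}
  have hBA : B ⊆ Ap ∪ An := union_subset_union_right (singleton_subset_iff.mpr hβ)
  have hout : ∀ γ ∈ Ap ∪ An, γ ∉ B → γ ∈ An ∧ γ ≠ β := fun γ hγ hγB => by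
    rw [mem_union, not_or, mem_singleton] at hγB
    exact ⟨(mem_union.mp hγ).resolve_left hγB.1, hγB.2⟩
  set d' : Fin m → (Fin n → ℝ) → ℝ := fun i γ => if γ ∈ B then d i γ else 0
  have hd'neg : ∀ i γ, d' i γ < 0 → γ ∈ B ∧ d i γ < 0 := fun i γ h => by
    by_cases hγ : γ ∈ B <;> simp_all [d']
  refine ⟨hcAp, fun γ hγ => ?_, m, d', fun γ hγ => ?_, fun i γ₁ _ γ₂ _ h₁ h₂ => ?_, fun i x => ?_⟩
  · by_cases hγβ : γ = β
    · exact hγβ ▸ hcβ β (mem_singleton_self β)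
    · exact (hvan γ hγ hγβ).le
  · by_cases hγB : γ ∈ B
    · simp only [d', if_pos hγB, hcd γ hγB]
    · simp only [d', if_neg hγB, sum_const_zero]
      exact hvan γ (hout γ hγ hγB).1 (hout γ hγ hγB).2
  · obtain ⟨hγ₁, hd₁⟩ := hd'neg i γ₁ h₁
    obtain ⟨hγ₂, hd₂⟩ := hd'neg i γ₂ h₂
    exact hneg i γ₁ hγ₁ γ₂ hγ₂ hd₁ hd₂
  · rw [expSum_eq_of_subset hBA fun γ _ hγB => if_neg hγB]
    convert hexp i x using 1
    exact sum_congr rfl fun γ hγ => by simp only [if_pos hγ]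

lemma exists_signed_ageCone_family (hAn : An.Nonempty) (hc : InSAGE Ap An c) :
    ∃ D : (Fin n → ℝ) → (Fin n → ℝ) → ℝ, (∀ γ ∈ Ap ∪ An, D γ ∈ ageCone (Ap ∪ An) γ) ∧
      (∀ δ ∈ Ap ∪ An, ∀ α ∈ Ap, 0 ≤ D δ α) ∧ (∀ δ ∈ Ap ∪ An, ∀ β ∈ An, D δ β ≤ 0) ∧
      ∀ γ ∈ Ap ∪ An, c γ = ∑ δ ∈ Ap ∪ An, D δ γ := by
  obtain ⟨hcAp, hcAn, m, d, hcd, hneg, hexp⟩ := hc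
  obtain ⟨D₀, hD₀, hsum₀⟩ := exists_ageCone_family_sum fun i =>
    exists_mem_ageCone (hAn.mono subset_union_right) (hneg i) (hexp i)
  obtain ⟨D, hD, hsum, hsign⟩ := exists_sameSignAt hD₀ (subset_refl (Ap ∪ An))
  have hcD : ∀ γ ∈ Ap ∪ An, c γ = ∑ δ ∈ Ap ∪ An, D δ γ := fun γ hγ => by
    rw [hcd γ hγ, ← Finset.sum_apply, ← Finset.sum_apply, hsum, hsum₀]
  refine ⟨D, hD, fun δ hδ α hα => ?_, fun δ hδ β hβ => ?_, hcD⟩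
  · have hαA := mem_union_left An hα
    exact (hsign α hαA).nonneg (hcD α hαA ▸ hcAp α hα) δ hδ
  · have hβA := mem_union_right Ap hβ
    exact (hsign β hβA).nonpos (hcD β hβA ▸ hcAn β hβ) δ hδ

lemma exists_sageExt_sum_eq (hdisj : Disjoint Ap An) (hAn : An.Nonempty)
    (hD : ∀ γ ∈ Ap ∪ An, D γ ∈ ageCone (Ap ∪ An) γ) (hDAp : ∀ δ ∈ Ap ∪ An, ∀ α ∈ Ap, 0 ≤ D δ α)
    (hDAn : ∀ δ ∈ Ap ∪ An, ∀ β ∈ An, D δ β ≤ 0) :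
    ∃ E : (Fin n → ℝ) → (Fin n → ℝ) → ℝ,
      (∀ β ∈ An, E β ∈ SAGEExt Ap An β) ∧ ∑ β ∈ An, E β = ∑ δ ∈ Ap ∪ An, D δ := by
  have hAp_mem : ∀ α ∈ Ap, ∀ β, D α ∈ ageCone (Ap ∪ An) β := fun α hα β =>
    mem_ageCone_of_nonneg (hD α (mem_union_left _ hα)) (fun δ hδ => (mem_union.mp hδ).elim
      (hDAp α (mem_union_left _ hα) δ) fun hδAn =>
        (hD α (mem_union_left _ hα)).1 δ hδ fun h => disjoint_left.mp hdisj hα (h ▸ hδAn)) β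
  obtain ⟨β₀, hβ₀⟩ := hAn
  refine ⟨fun β => D β + if β = β₀ then ∑ α ∈ Ap, D α else 0, fun β hβ => ?_, ?_⟩
  · refine mem_sageExt_of_mem_ageCone hdisj hβ
      (add_mem (hD β (mem_union_right _ hβ)) ?_) fun γ hγ => ?_
    · split_ifs
      · exact sum_mem fun α hα => hAp_mem α hα β
      · exact zero_mem _
    · refine add_nonpos (hDAn β (mem_union_right _ hβ) γ hγ) ?_
      split_ifs
      · rw [Finset.sum_apply]
        exact sum_nonpos fun α hα => hDAn α (mem_union_left _ hα) γ hγ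
      · exact le_rfl
  · rw [sum_add_distrib, sum_ite_eq', if_pos hβ₀, sum_union hdisj, add_comm]

lemma exists_sageExt_sum (hdisj : Disjoint Ap An) (hAn : An.Nonempty) (hc : InSAGE Ap An c) :
    ∃ E : (Fin n → ℝ) → (Fin n → ℝ) → ℝ,
      (∀ β ∈ An, E β ∈ SAGEExt Ap An β) ∧ ∀ γ ∈ Ap ∪ An, c γ = ∑ β ∈ An, E β γ := by
  obtain ⟨D, hD, hDAp, hDAn, hcD⟩ := exists_signed_ageCone_family hAn hc
  obtain ⟨E, hE, hsum⟩ := exists_sageExt_sum_eq hdisj hAn hD hDAp hDAn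
  exact ⟨E, hE, fun γ hγ => by rw [← Finset.sum_apply, hsum, Finset.sum_apply, hcD γ hγ]⟩

end SAGE

theorem dual_sage_eq_inter_general {n : ℕ}
    (Ap An : Finset (Fin n → ℝ)) (hdisj : Disjoint Ap An)
    (hAn : An.Nonempty) :
    dualCone (Ap ∪ An) {c | InSAGE Ap An c}
      = ⋂ β ∈ An, dualCone (Ap ∪ An) (SAGEExt Ap An β) := by
  ext v
  simp only [Set.mem_iInter₂]
  constructor
  · exact fun hv β hβ c hc => hv c (SAGE.inSAGE_of_mem_sageExt hβ hc)
  · intro hv c hc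
    obtain ⟨E, hE, hcE⟩ := SAGE.exists_sageExt_sum hdisj hAn hc
    calc 0 ≤ ∑ β ∈ An, ∑ γ ∈ Ap ∪ An, v γ * E β γ := sum_nonneg fun β hβ => hv β hβ _ (hE β hβ)
      _ = ∑ γ ∈ Ap ∪ An, v γ * c γ := by
        rw [sum_comm]
        exact sum_congr rfl fun γ hγ => by rw [hcE γ hγ, mul_sum]

/-- The dual of the signed SONC cone is the intersection of the duals of the
single-negative-term cones. -/
theorem dual_sage_eq_inter {n : ℕ}
    (Ap An : Finset (Fin n → ℝ)) (hdisj : Disjoint Ap An)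
    (hAp : Ap.Nonempty) (hAn : An.Nonempty) :
    dualCone (Ap ∪ An) {c | InSAGE Ap An c}
      = ⋂ β ∈ An, dualCone (Ap ∪ An) (SAGEExt Ap An β) :=
  dual_sage_eq_inter_general Ap An hdisj hAn
end

section
/- Let A⁺ ⊆ ℝⁿ be a finite nonempty set, let β ∈ ℝⁿ with β ∉ A⁺, and set A = A⁺ ∪ {β}. Then the dual cone of C_{(A⁺,{β})} consists exactly of those v : A → ℝ with v_α ≥ 0 for all α ∈ A⁺ and v_β ≤ ∏_{α∈A⁺} v_α^{λ_α} for every λ ∈ Λ(A⁺,β) (real powers, with the convention 0⁰ = 1). -/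
open Finset

/-- `Λ(A⁺, β)`: barycentric coordinates of `β` with respect to `A⁺`. -/
def IsBary {n : ℕ} (Ap : Finset (Fin n → ℝ)) (β : Fin n → ℝ) (lam : (Fin n → ℝ) → ℝ) : Prop :=
  (∀ α ∈ Ap, 0 ≤ lam α) ∧ (∑ α ∈ Ap, lam α = 1) ∧ (∑ α ∈ Ap, lam α • α = β)

/-!
Testing `v` against the circuit vectors `c_α = λ_α s_α`, `c_β = -∏ s_α ^ λ_α`, whose exponential
sums are nonnegative by the weighted AM-GM inequality, gives `v_β ∏ s_α ^ λ_α ≤ ∑ λ_α v_α s_α`;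
the choice `s_α = (v_α + ε)⁻¹` and `ε → 0` yield the inequalities `v_β ≤ ∏ v_α ^ λ_α`.

Conversely, if `r < ∏ w_α ^ λ_α` for every `λ ∈ Λ(A⁺, β)`, a strict Farkas lemma (obtained from
Gordan's alternative, i.e. from separating `0` from a compact convex hull) gives a point `t` with
`r e^⟨t, α⟩ < w_α e^⟨t, β⟩` for all `α ∈ A⁺`. Evaluating `f_c ≥ 0` at `t` then shows
`∑ w_α c_α + r c_β ≥ 0`. Taking `w_α = v_α + ε`, `r = v_β / (1 + ε)` makes the hypothesis strict,
and `ε → 0` concludes.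
-/
section Alternatives

variable {ι : Type*} [Fintype ι]

theorem exists_strongDual_pos_of_sum_smul_ne_zero {E : Type*} [TopologicalSpace E]
    [AddCommGroup E] [IsTopologicalAddGroup E] [Module ℝ E] [ContinuousSMul ℝ E]
    [LocallyConvexSpace ℝ E] [T2Space E] (q : ι → E)
    (h : ∀ w ∈ stdSimplex ℝ ι, ∑ i, w i • q i ≠ 0) :
    ∃ f : StrongDual ℝ E, ∀ i, 0 < f (q i) := by
  classical
  set Φ := Fintype.linearCombination ℝ q
  have hΦ : ∀ w, Φ w = ∑ i, w i • q i := Fintype.linearCombination_apply ℝ q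
  have hcompact : IsCompact (Φ '' stdSimplex ℝ ι) :=
    (isCompact_stdSimplex ℝ ι).image Φ.continuous_of_finiteDimensional
  obtain ⟨f, u, hf0, hfK⟩ := geometric_hahn_banach_point_closed
    ((convex_stdSimplex ℝ ι).linear_image Φ) hcompact.isClosed (x := 0)
    (by rintro ⟨w, hw, h0⟩; exact h w hw (by rwa [← hΦ]))
  refine ⟨f, fun i => ?_⟩
  have hqi : f (q i) > u := hfK _ ⟨Pi.single i 1, single_mem_stdSimplex ℝ i, by simp [hΦ]⟩
  rw [map_zero] at hf0
  linarith

theorem exists_dotProduct_lt_of_forall_stdSimplex {m : ℕ} (p : ι → Fin m → ℝ) (b : ι → ℝ)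
    (h : ∀ w ∈ stdSimplex ℝ ι, ∑ i, w i • p i = 0 → 0 < ∑ i, w i * b i) :
    ∃ t : Fin m → ℝ, ∀ i, t ⬝ᵥ p i < b i := by
  -- Homogenize: the extra point `(0, 1)` forces the last coordinate of the separating
  -- functional to be positive.
  let q : Option ι → (Fin m → ℝ) × ℝ := fun o => o.elim (0, 1) fun i => (-p i, b i)
  have hq : ∀ w ∈ stdSimplex ℝ (Option ι), ∑ o, w o • q o ≠ 0 := by
    rintro w ⟨hw0, hw1⟩ hsum
    rw [Fintype.sum_option] at hw1 hsum
    have hp : ∑ i, w (some i) • p i = 0 := by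
      simpa [q, Prod.fst_sum, Finset.sum_neg_distrib] using congrArg Prod.fst hsum
    have hb : w none + ∑ i, w (some i) * b i = 0 := by
      simpa [q, Prod.snd_sum] using congrArg Prod.snd hsum
    set σ := ∑ i, w (some i)
    rcases (Finset.sum_nonneg fun i _ => hw0 (some i) : 0 ≤ σ).eq_or_lt with hσ | hσ
    · have hzero : ∀ i, w (some i) = 0 := fun i =>
        (Finset.sum_eq_zero_iff_of_nonneg fun i _ => hw0 (some i)).mp hσ.symm i (mem_univ i)
      simp [hzero] at hb hw1
      linarith
    · have hpos := h (fun i => w (some i) / σ)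
        ⟨fun i => div_nonneg (hw0 _) hσ.le, by rw [← Finset.sum_div, div_self hσ.ne']⟩
        (by simp_rw [div_eq_inv_mul, ← smul_smul, ← Finset.smul_sum, hp, smul_zero])
      simp_rw [div_mul_eq_mul_div, ← Finset.sum_div] at hpos
      linarith [(div_pos_iff_of_pos_right hσ).mp hpos, hw0 none]
  obtain ⟨f, hf⟩ := exists_strongDual_pos_of_sum_smul_ne_zero q hq
  set τ := f (0, 1)
  have hτ : 0 < τ := hf none
  let y : Fin m → ℝ := fun j => f ((fun k => if j = k then 1 else 0), 0)
  have hf_mk : ∀ x s, f (x, s) = y ⬝ᵥ x + s * τ := by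
    intro x s
    have hx : f (x, 0) = ∑ j, x j * y j := by
      simpa using LinearMap.pi_apply_eq_sum_univ (f.toLinearMap ∘ₗ LinearMap.inl ℝ _ ℝ) x
    have hsplit : (x, s) = (x, 0) + s • ((0 : Fin m → ℝ), (1 : ℝ)) := by simp
    rw [hsplit, map_add, map_smul, smul_eq_mul, hx, dotProduct_comm]
    rfl
  refine ⟨τ⁻¹ • y, fun i => ?_⟩
  have hi := hf (some i)
  simp only [q, Option.elim_some, hf_mk, dotProduct_neg] at hi
  rw [smul_dotProduct, smul_eq_mul, inv_mul_lt_iff₀ hτ]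
  linarith

end Alternatives

lemma le_of_forall_pos_le_of_continuousAt {g : ℝ → ℝ} {a : ℝ} (hg : ContinuousAt g 0)
    (h : ∀ ε > 0, a ≤ g ε) : a ≤ g 0 :=
  ge_of_tendsto (hg.tendsto.mono_left nhdsWithin_le_nhds)
    (eventually_nhdsWithin_of_forall (s := Set.Ioi 0) h)

lemma sum_union_singleton_of_notMem {ι M : Type*} [DecidableEq ι] [AddCommMonoid M]
    {s : Finset ι} {a : ι} (ha : a ∉ s) (f : ι → M) :
    ∑ x ∈ s ∪ {a}, f x = ∑ x ∈ s, f x + f a := by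
  rw [union_singleton, sum_insert ha, add_comm]

section SAGE

variable {n : ℕ} {Ap : Finset (Fin n → ℝ)} {β : Fin n → ℝ}

lemma expSum_union_singleton (hβ : β ∉ Ap) (c : (Fin n → ℝ) → ℝ) (x : Fin n → ℝ) :
    expSum (Ap ∪ {β}) c x
      = ∑ α ∈ Ap, c α * Real.exp (x ⬝ᵥ α) + c β * Real.exp (x ⬝ᵥ β) :=
  sum_union_singleton_of_notMem hβ _

lemma IsBary.sum_mul_dotProduct {lam : (Fin n → ℝ) → ℝ} (hlam : IsBary Ap β lam)
    (x : Fin n → ℝ) : ∑ α ∈ Ap, lam α * (x ⬝ᵥ α) = x ⬝ᵥ β := by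
  simp [← hlam.2.2, dotProduct_sum, dotProduct_smul]

lemma InSAGE.expSum_nonneg {An : Finset (Fin n → ℝ)} {c : (Fin n → ℝ) → ℝ}
    (hc : InSAGE Ap An c) (x : Fin n → ℝ) : 0 ≤ expSum (Ap ∪ An) c x := by
  obtain ⟨-, -, m, d, hcd, -, hd⟩ := hc
  have : expSum (Ap ∪ An) c x = ∑ i, expSum (Ap ∪ An) (d i) x := by
    simp only [expSum]
    rw [sum_comm]
    exact sum_congr rfl fun γ hγ => by rw [hcd γ hγ, sum_mul]
  rw [this]
  exact sum_nonneg fun i _ => hd i x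

lemma inSAGE_singleton_of_expSum_nonneg {c : (Fin n → ℝ) → ℝ} (hc : ∀ α ∈ Ap, 0 ≤ c α)
    (hcβ : c β ≤ 0) (hf : ∀ x, 0 ≤ expSum (Ap ∪ {β}) c x) : InSAGE Ap {β} c := by
  have hneg : ∀ γ ∈ Ap ∪ {β}, c γ < 0 → γ = β := fun γ hγ hcγ => by
    rcases mem_union.mp hγ with hγ | hγ
    · exact absurd (hc γ hγ) hcγ.not_ge
    · exact mem_singleton.mp hγ
  refine ⟨hc, by simpa using hcβ, 1, fun _ => c, by simp, ?_, fun _ => hf⟩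
  intro _ γ₁ hγ₁ γ₂ hγ₂ h₁ h₂
  rw [hneg γ₁ hγ₁ h₁, hneg γ₂ hγ₂ h₂]

lemma expSum_circuit_nonneg (hβ : β ∉ Ap) {lam : (Fin n → ℝ) → ℝ} (hlam : IsBary Ap β lam)
    {s : (Fin n → ℝ) → ℝ} (hs : ∀ α ∈ Ap, 0 ≤ s α) (x : Fin n → ℝ) :
    0 ≤ expSum (Ap ∪ {β})
      (Function.update (fun γ => lam γ * s γ) β (-∏ α ∈ Ap, s α ^ lam α)) x := by
  have hamgm := Real.geom_mean_le_arith_mean_weighted Ap lam (fun α => s α * Real.exp (x ⬝ᵥ α))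
    hlam.1 hlam.2.1 fun α hα => mul_nonneg (hs α hα) (Real.exp_pos _).le
  have hprod : ∏ α ∈ Ap, (s α * Real.exp (x ⬝ᵥ α)) ^ lam α
      = (∏ α ∈ Ap, s α ^ lam α) * Real.exp (x ⬝ᵥ β) := by
    rw [← hlam.sum_mul_dotProduct x, Real.exp_sum, ← prod_mul_distrib]
    refine prod_congr rfl fun α hα => ?_
    rw [Real.mul_rpow (hs α hα) (Real.exp_pos _).le, ← Real.exp_mul, mul_comm (x ⬝ᵥ α)]
  rw [expSum_union_singleton hβ, Function.update_self,
    sum_congr rfl fun α hα => by rw [Function.update_of_ne (ne_of_mem_of_not_mem hα hβ)]]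
  simp only [mul_assoc] at hamgm ⊢
  linarith

lemma exists_dotProduct_sub_lt_of_isBary (b : (Fin n → ℝ) → ℝ)
    (h : ∀ lam, IsBary Ap β lam → 0 < ∑ α ∈ Ap, lam α * b α) :
    ∃ t : Fin n → ℝ, ∀ α ∈ Ap, t ⬝ᵥ (α - β) < b α := by
  refine (exists_dotProduct_lt_of_forall_stdSimplex (fun a : Ap => (a : Fin n → ℝ) - β)
    (fun a => b a) ?_).imp fun t ht α hα => ht ⟨α, hα⟩
  rintro w ⟨hw0, hw1⟩ hsum
  set lam := Function.extend Subtype.val w 0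
  have hext : ∀ a : Ap, lam a = w a := Subtype.val_injective.extend_apply w 0
  have hsum_eq : ∀ {M : Type} [AddCommMonoid M] (F : (Fin n → ℝ) → ℝ → M),
      ∑ α ∈ Ap, F α (lam α) = ∑ a : Ap, F a (w a) := fun F => by
    rw [← sum_coe_sort Ap]
    exact sum_congr rfl fun a _ => by rw [hext]
  have hbary : IsBary Ap β lam := by
    refine ⟨fun α hα => hext ⟨α, hα⟩ ▸ hw0 _, by rw [hsum_eq fun _ l => l, hw1], ?_⟩
    simp only [smul_sub, sum_sub_distrib, ← sum_smul, hw1, one_smul, sub_eq_zero] at hsum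
    rw [hsum_eq fun α l => l • α, hsum]
  have := h lam hbary
  rwa [hsum_eq fun α l => l * b α] at this

lemma nonneg_of_mem_dualCone (hβ : β ∉ Ap) {v : (Fin n → ℝ) → ℝ}
    (hv : v ∈ dualCone (Ap ∪ {β}) {c | InSAGE Ap {β} c}) {α : Fin n → ℝ} (hα : α ∈ Ap) :
    0 ≤ v α := by
  classical
  have hsingle : ∀ γ, (0 : ℝ) ≤ (Pi.single α 1 : (Fin n → ℝ) → ℝ) γ := fun γ => by
    by_cases h : γ = α <;> simp [h]
  have hc : InSAGE Ap {β} (Pi.single α 1) :=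
    inSAGE_singleton_of_expSum_nonneg (fun γ _ => hsingle γ)
      (Pi.single_eq_of_ne (ne_of_mem_of_not_mem hα hβ).symm _).le
      fun x => sum_nonneg fun γ _ => mul_nonneg (hsingle γ) (Real.exp_pos _).le
  simpa [Pi.single_apply, hα] using hv _ hc

lemma mul_prod_rpow_le_of_mem_dualCone (hβ : β ∉ Ap) {v : (Fin n → ℝ) → ℝ}
    (hv : v ∈ dualCone (Ap ∪ {β}) {c | InSAGE Ap {β} c}) {lam : (Fin n → ℝ) → ℝ}
    (hlam : IsBary Ap β lam) {s : (Fin n → ℝ) → ℝ} (hs : ∀ α ∈ Ap, 0 ≤ s α) :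
    v β * ∏ α ∈ Ap, s α ^ lam α ≤ ∑ α ∈ Ap, v α * (lam α * s α) := by
  have hupdate : ∀ α ∈ Ap, Function.update (fun γ => lam γ * s γ) β
      (-∏ α ∈ Ap, s α ^ lam α) α = lam α * s α := fun α hα =>
    Function.update_of_ne (ne_of_mem_of_not_mem hα hβ) _ _
  have hc := inSAGE_singleton_of_expSum_nonneg
    (fun α hα => (hupdate α hα).symm ▸ mul_nonneg (hlam.1 α hα) (hs α hα))
    (by rw [Function.update_self, neg_nonpos]
        exact prod_nonneg fun α hα => Real.rpow_nonneg (hs α hα) _)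
    (expSum_circuit_nonneg hβ hlam hs)
  have := hv _ hc
  rw [sum_union_singleton_of_notMem hβ, Function.update_self,
    sum_congr rfl fun α hα => by rw [hupdate α hα]] at this
  linarith

lemma le_prod_rpow_add_of_mem_dualCone (hβ : β ∉ Ap) {v : (Fin n → ℝ) → ℝ}
    (hv : v ∈ dualCone (Ap ∪ {β}) {c | InSAGE Ap {β} c}) {lam : (Fin n → ℝ) → ℝ}
    (hlam : IsBary Ap β lam) {ε : ℝ} (hε : 0 < ε) :
    v β ≤ ∏ α ∈ Ap, (v α + ε) ^ lam α := by
  have hpos : ∀ α ∈ Ap, 0 < v α + ε := fun α hα => by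
    linarith [nonneg_of_mem_dualCone hβ hv hα]
  have hP : 0 < ∏ α ∈ Ap, (v α + ε) ^ lam α :=
    prod_pos fun α hα => Real.rpow_pos_of_pos (hpos α hα) _
  have h := mul_prod_rpow_le_of_mem_dualCone hβ hv hlam (s := fun α => (v α + ε)⁻¹)
    fun α hα => (inv_pos.2 (hpos α hα)).le
  have hprod : ∏ α ∈ Ap, (v α + ε)⁻¹ ^ lam α = (∏ α ∈ Ap, (v α + ε) ^ lam α)⁻¹ := by
    rw [← prod_inv_distrib]
    exact prod_congr rfl fun α hα => Real.inv_rpow (hpos α hα).le _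
  have hsum : ∑ α ∈ Ap, v α * (lam α * (v α + ε)⁻¹) ≤ 1 := by
    calc ∑ α ∈ Ap, v α * (lam α * (v α + ε)⁻¹)
        = ∑ α ∈ Ap, lam α * (v α / (v α + ε)) := by
          refine sum_congr rfl fun α _ => ?_
          rw [div_eq_mul_inv]
          ring
      _ ≤ ∑ α ∈ Ap, lam α := sum_le_sum fun α hα =>
          mul_le_of_le_one_right (hlam.1 α hα) ((div_le_one (hpos α hα)).2 (by linarith))
      _ = 1 := hlam.2.1
  rw [hprod, ← div_eq_mul_inv] at h
  exact (div_le_one hP).1 (h.trans hsum)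

lemma InSAGE.pairing_nonneg_of_lt_prod_rpow (hβ : β ∉ Ap) {c : (Fin n → ℝ) → ℝ}
    (hc : InSAGE Ap {β} c) {w : (Fin n → ℝ) → ℝ} (hw : ∀ α ∈ Ap, 0 < w α) {r : ℝ} (hr : 0 < r)
    (h : ∀ lam, IsBary Ap β lam → r < ∏ α ∈ Ap, w α ^ lam α) :
    0 ≤ ∑ α ∈ Ap, w α * c α + r * c β := by
  obtain ⟨t, ht⟩ := exists_dotProduct_sub_lt_of_isBary (Ap := Ap) (β := β)
    (fun α => Real.log (w α) - Real.log r) fun lam hlam => by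
      have hlog : Real.log (∏ α ∈ Ap, w α ^ lam α) = ∑ α ∈ Ap, lam α * Real.log (w α) := by
        rw [Real.log_prod fun α hα => (Real.rpow_pos_of_pos (hw α hα) _).ne']
        exact sum_congr rfl fun α hα => Real.log_rpow (hw α hα) _
      simp_rw [mul_sub, sum_sub_distrib, ← sum_mul, hlam.2.1, one_mul, ← hlog]
      exact sub_pos.2 (Real.log_lt_log hr (h lam hlam))
  have hcoef : ∀ α ∈ Ap, r * Real.exp (t ⬝ᵥ α) ≤ w α * Real.exp (t ⬝ᵥ β) := fun α hα => by
    have := ht α hα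
    rw [dotProduct_sub] at this
    rw [← Real.exp_log hr, ← Real.exp_log (hw α hα), ← Real.exp_add, ← Real.exp_add]
    exact Real.exp_le_exp.2 (by linarith)
  have hf := hc.expSum_nonneg t
  rw [expSum_union_singleton hβ] at hf
  have key : 0 ≤ (∑ α ∈ Ap, w α * c α + r * c β) * Real.exp (t ⬝ᵥ β) := by
    calc 0 ≤ r * (∑ α ∈ Ap, c α * Real.exp (t ⬝ᵥ α) + c β * Real.exp (t ⬝ᵥ β)) :=
          mul_nonneg hr.le hf
      _ = ∑ α ∈ Ap, c α * (r * Real.exp (t ⬝ᵥ α)) + r * c β * Real.exp (t ⬝ᵥ β) := by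
          rw [mul_add, mul_sum, ← mul_assoc r (c β)]
          congr 1
          exact sum_congr rfl fun _ _ => by ring
      _ ≤ ∑ α ∈ Ap, c α * (w α * Real.exp (t ⬝ᵥ β)) + r * c β * Real.exp (t ⬝ᵥ β) :=
          add_le_add_left (sum_le_sum fun α hα =>
            mul_le_mul_of_nonneg_left (hcoef α hα) (hc.1 α hα)) _
      _ = (∑ α ∈ Ap, w α * c α + r * c β) * Real.exp (t ⬝ᵥ β) := by
          rw [add_mul, sum_mul]
          congr 1
          exact sum_congr rfl fun _ _ => by ring
  exact nonneg_of_mul_nonneg_left key (Real.exp_pos _)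

end SAGE

theorem dual_single_beta_description_general {n : ℕ}
    (Ap : Finset (Fin n → ℝ))
    (β : Fin n → ℝ) (hβ : β ∉ Ap) :
    dualCone (Ap ∪ {β}) {c | InSAGE Ap {β} c}
      = {v | (∀ α ∈ Ap, 0 ≤ v α) ∧
          ∀ lam : (Fin n → ℝ) → ℝ, IsBary Ap β lam → v β ≤ ∏ α ∈ Ap, v α ^ lam α} := by
  ext v
  constructor
  · intro hv
    refine ⟨fun α => nonneg_of_mem_dualCone hβ hv, fun lam hlam => ?_⟩
    have hcont : Continuous fun ε => ∏ α ∈ Ap, (v α + ε) ^ lam α :=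
      continuous_finsetProd _ fun α hα =>
        (Real.continuous_rpow_const (hlam.1 α hα)).comp (continuous_const_add (v α))
    simpa using le_of_forall_pos_le_of_continuousAt hcont.continuousAt
      fun ε hε => le_prod_rpow_add_of_mem_dualCone hβ hv hlam hε
  · rintro ⟨hv, hvβ⟩ c (hc : InSAGE Ap {β} c)
    rw [sum_union_singleton_of_notMem hβ]
    rcases le_or_gt (v β) 0 with hvβ_nonpos | hvβ_pos
    · exact add_nonneg (sum_nonneg fun α hα => mul_nonneg (hv α hα) (hc.1 α hα))
        (mul_nonneg_of_nonpos_of_nonpos hvβ_nonpos (hc.2.1 β (mem_singleton_self β)))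
    have hcont : ContinuousAt (fun ε => ∑ α ∈ Ap, (v α + ε) * c α + v β / (1 + ε) * c β) 0 := by
      fun_prop (disch := norm_num)
    simpa using le_of_forall_pos_le_of_continuousAt hcont fun ε hε =>
      hc.pairing_nonneg_of_lt_prod_rpow hβ (fun α hα => by linarith [hv α hα])
        (div_pos hvβ_pos (by linarith)) fun lam hlam =>
          calc v β / (1 + ε) < v β := div_lt_self hvβ_pos (by linarith)
            _ ≤ ∏ α ∈ Ap, v α ^ lam α := hvβ lam hlam
            _ ≤ ∏ α ∈ Ap, (v α + ε) ^ lam α := prod_le_prod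
                (fun α hα => Real.rpow_nonneg (hv α hα) _)
                fun α hα => Real.rpow_le_rpow (hv α hα) (by linarith) (hlam.1 α hα)

/-- Description of the dual cone of `C_{(A⁺,{β})}` via weighted geometric means
over barycentric coordinates. -/
theorem dual_single_beta_description {n : ℕ}
    (Ap : Finset (Fin n → ℝ)) (hAp : Ap.Nonempty)
    (β : Fin n → ℝ) (hβ : β ∉ Ap) :
    dualCone (Ap ∪ {β}) {c | InSAGE Ap {β} c}
      = {v | (∀ α ∈ Ap, 0 ≤ v α) ∧
          ∀ lam : (Fin n → ℝ) → ℝ, IsBary Ap β lam → v β ≤ ∏ α ∈ Ap, v α ^ lam α} :=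
  dual_single_beta_description_general Ap β hβ
end

section
/- Let A⁺ ⊆ ℝⁿ be finite and nonempty, let β ∈ ℝⁿ, let v_α > 0 for all α ∈ A⁺ and v_β ∈ ℝ. Then the following are equivalent: (1) for every λ ∈ Λ(A⁺,β) one has |v_β| ≤ ∏_{α∈A⁺} v_α^{λ_α}; (2) there exists τ ∈ ℝⁿ such that |v_β| ≤ v_α·exp(⟨α−β, τ⟩) for every α ∈ A⁺ (equivalently, ln(|v_β|/v_α) ≤ ⟨α−β, τ⟩ for all α ∈ A⁺). -/
open Finset

/-! Off the trivial case `v_β = 0`, taking logarithms turns (1) into `∑ λ_α c_α ≤ 0` for all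
`λ ∈ Λ(A⁺, β)` and (2) into `c_α ≤ ⟨α - β, τ⟩` for all `α`, where `c_α = log |v_β| - log v_α`.
Averaging the second against `λ` gives the first. Conversely, the first says (after rescaling)
that no nonnegative combination of the points `(α - β, c_α)` equals `(0, 1)`; the cone they
generate is closed (conic Carathéodory reduces it to finitely many simplicial cones), so a
hyperplane separates it from `(0, 1)`, and that hyperplane is the certificate `τ` (Farkas' lemma).
-/

namespace PointedCone

section Caratheodory

variable {R E ι : Type*} [Field R] [LinearOrder R] [IsStrictOrderedRing R]
  [AddCommGroup E] [Module R E] {v : ι → E} {s : Finset ι} {x : E}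

theorem mem_hull_image_finset_iff :
    x ∈ hull R (v '' s) ↔ ∃ c : ι → R, (∀ i ∈ s, 0 ≤ c i) ∧ ∑ i ∈ s, c i • v i = x := by
  rw [hull, Submodule.mem_span_image_finset_iff_exists_fun']
  constructor
  · rintro ⟨c, rfl⟩
    exact ⟨fun i => c i, fun i _ => (c i).2, rfl⟩
  · rintro ⟨c, hc, rfl⟩
    refine ⟨fun i => ⟨max (c i) 0, le_max_right _ _⟩, sum_congr rfl fun i hi => ?_⟩
    change max (c i) 0 • v i = c i • v i
    rw [max_eq_left (hc i hi)]

theorem exists_pos_of_not_linearIndepOn_finset (hs : ¬LinearIndepOn R v s) :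
    ∃ g : ι → R, ∑ i ∈ s, g i • v i = 0 ∧ ∃ j ∈ s, 0 < g j := by
  obtain ⟨g, hg, j, hj, hgj⟩ := not_linearIndepOn_finset_iff.mp hs
  rcases hgj.lt_or_gt with hneg | hpos
  · exact ⟨-g, by simp [neg_smul, hg], j, hj, by simpa using hneg⟩
  · exact ⟨g, hg, j, hj, hpos⟩

theorem exists_mem_hull_image_erase [DecidableEq ι] (hs : ¬LinearIndepOn R v s)
    (hx : x ∈ hull R (v '' s)) : ∃ k ∈ s, x ∈ hull R (v '' (s.erase k)) := by
  obtain ⟨g, hg, j, hj, hgj⟩ := exists_pos_of_not_linearIndepOn_finset hs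
  obtain ⟨c, hc, rfl⟩ := mem_hull_image_finset_iff.mp hx
  -- Subtract the largest multiple `r • g` of the relation keeping all coefficients nonnegative.
  obtain ⟨k, hkT, hmin⟩ := (s.filter (0 < g ·)).exists_min_image (fun i => c i / g i)
    ⟨j, mem_filter.2 ⟨hj, hgj⟩⟩
  obtain ⟨hk, hgk⟩ := mem_filter.1 hkT
  set r := c k / g k
  have hr : 0 ≤ r := div_nonneg (hc k hk) hgk.le
  refine ⟨k, hk, mem_hull_image_finset_iff.2 ⟨fun i => c i - r * g i, fun i hi => ?_, ?_⟩⟩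
  · have hi := mem_of_mem_erase hi
    rw [sub_nonneg]
    rcases lt_or_ge 0 (g i) with hgi | hgi
    · exact (le_div_iff₀ hgi).1 (hmin i (mem_filter.2 ⟨hi, hgi⟩))
    · exact (mul_nonpos_of_nonneg_of_nonpos hr hgi).trans (hc i hi)
  · rw [sum_erase s (by simp [r, hgk.ne'])]
    simp only [sub_smul, mul_smul, sum_sub_distrib, ← smul_sum, hg, smul_zero, sub_zero]

theorem exists_linearIndepOn_mem_hull_image (hx : x ∈ hull R (v '' s)) :
    ∃ t ⊆ s, LinearIndepOn R v t ∧ x ∈ hull R (v '' t) := by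
  classical
  induction s using Finset.strongInduction with
  | H s ih =>
    by_cases hs : LinearIndepOn R v s
    · exact ⟨s, subset_rfl, hs, hx⟩
    obtain ⟨k, hk, hxk⟩ := exists_mem_hull_image_erase hs hx
    obtain ⟨t, hts, ht, hxt⟩ := ih _ (erase_ssubset hk) hxk
    exact ⟨t, hts.trans (erase_subset k s), ht, hxt⟩

end Caratheodory

variable {E ι : Type*} [AddCommGroup E] [Module ℝ E] [TopologicalSpace E] [IsTopologicalAddGroup E]
  [ContinuousSMul ℝ E] [T2Space E] {v : ι → E}

open Topology in
theorem isClosed_hull_image_of_linearIndepOn {t : Finset ι} (ht : LinearIndepOn ℝ v t) :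
    IsClosed (hull ℝ (v '' t) : Set E) := by
  set f := Fintype.linearCombination ℝ (fun i : t => v i)
  have hf : IsClosedEmbedding f := LinearMap.isClosedEmbedding_of_injective
    (LinearMap.ker_eq_bot.mpr ht.fintypeLinearCombination_injective)
  have himage : (hull ℝ (v '' t) : Set E) = f '' Set.Ici 0 := by
    ext x
    simp only [SetLike.mem_coe, hull, Fintype.mem_span_image_iff_exists_fun, Set.mem_image,
      Set.mem_Ici, f, Fintype.linearCombination_apply]
    constructor
    · rintro ⟨c, rfl⟩
      exact ⟨fun i => c i, fun i => (c i).2, rfl⟩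
    · rintro ⟨c, hc, rfl⟩
      exact ⟨fun i => ⟨c i, hc i⟩, rfl⟩
  rw [himage]
  exact hf.isClosedMap _ isClosed_Ici

theorem isClosed_hull_image_finset (s : Finset ι) : IsClosed (hull ℝ (v '' s) : Set E) := by
  classical
  have hunion : (hull ℝ (v '' s) : Set E) =
      ⋃ t ∈ s.powerset.filter (fun t : Finset ι => LinearIndepOn ℝ v t),
        (hull ℝ (v '' t) : Set E) := by
    ext x
    simp only [SetLike.mem_coe, Set.mem_iUnion, mem_filter, mem_powerset, exists_prop]
    constructor
    · rintro hx
      obtain ⟨t, hts, ht, hxt⟩ := exists_linearIndepOn_mem_hull_image hx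
      exact ⟨t, ⟨hts, ht⟩, hxt⟩
    · rintro ⟨t, ⟨hts, -⟩, hxt⟩
      exact Submodule.span_mono (Set.image_mono (coe_subset.2 hts)) hxt
  rw [hunion]
  exact isClosed_biUnion_finset fun t ht =>
    isClosed_hull_image_of_linearIndepOn (mem_filter.1 ht).2

end PointedCone

open PointedCone in
theorem exists_strongDual_ge_of_sum_mul_nonpos {E ι : Type*} [AddCommGroup E] [Module ℝ E]
    [TopologicalSpace E] [IsTopologicalAddGroup E] [ContinuousSMul ℝ E] [T2Space E]
    [LocallyConvexSpace ℝ E] (s : Finset ι) (w : ι → E) (c : ι → ℝ)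
    (h : ∀ lam : ι → ℝ, (∀ i ∈ s, 0 ≤ lam i) → ∑ i ∈ s, lam i • w i = 0 →
      ∑ i ∈ s, lam i * c i ≤ 0) :
    ∃ f : StrongDual ℝ E, ∀ i ∈ s, c i ≤ f (w i) := by
  let K : ProperCone ℝ (E × ℝ) :=
    ⟨hull ℝ ((fun i => (w i, c i)) '' s), isClosed_hull_image_finset s⟩
  have hK : ((0 : E), (1 : ℝ)) ∉ K := by
    intro hmem
    obtain ⟨lam, hlam, hsum⟩ := mem_hull_image_finset_iff.1 hmem
    have hw : ∑ i ∈ s, lam i • w i = 0 := by simpa [Prod.fst_sum] using congrArg Prod.fst hsum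
    have hc : ∑ i ∈ s, lam i * c i = 1 := by simpa [Prod.snd_sum] using congrArg Prod.snd hsum
    linarith [h lam hlam hw]
  obtain ⟨g, hgK, hg⟩ := K.hyperplane_separation_point hK
  refine ⟨(-g (0, 1))⁻¹ • g.comp (ContinuousLinearMap.inl ℝ E ℝ), fun i hi => ?_⟩
  have hgi : 0 ≤ g (w i, c i) := hgK _ (subset_hull (Set.mem_image_of_mem _ hi))
  have hsplit : g (w i, c i) = g (w i, 0) + c i * g (0, 1) := by
    rw [← smul_eq_mul, ← map_smul, ← map_add]
    simp
  change c i ≤ (-g (0, 1))⁻¹ * g (w i, 0)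
  rw [le_inv_mul_iff₀ (neg_pos.2 hg)]
  linarith

theorem IsBary.sum_smul_sub_eq_zero {n : ℕ} {Ap : Finset (Fin n → ℝ)} {β : Fin n → ℝ}
    {lam : (Fin n → ℝ) → ℝ} (h : IsBary Ap β lam) : ∑ α ∈ Ap, lam α • (α - β) = 0 := by
  obtain ⟨-, hsum, hβ⟩ := h
  simp only [smul_sub, sum_sub_distrib, ← sum_smul, hsum, hβ, one_smul, sub_self]

theorem isBary_div_sum {n : ℕ} {Ap : Finset (Fin n → ℝ)} {β : Fin n → ℝ}
    {lam : (Fin n → ℝ) → ℝ} (hlam : ∀ α ∈ Ap, 0 ≤ lam α)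
    (hsum : ∑ α ∈ Ap, lam α • (α - β) = 0) (hpos : 0 < ∑ α ∈ Ap, lam α) :
    IsBary Ap β (fun α => lam α / ∑ α' ∈ Ap, lam α') := by
  set T := ∑ α' ∈ Ap, lam α'
  have hβ : ∑ α ∈ Ap, lam α • α = T • β := by
    rwa [← sub_eq_zero, sum_smul, ← sum_sub_distrib, ← sum_congr rfl fun α _ => smul_sub _ _ _]
  refine ⟨fun α hα => div_nonneg (hlam α hα) hpos.le, by rw [← sum_div, div_self hpos.ne'], ?_⟩
  calc ∑ α ∈ Ap, (lam α / T) • α = T⁻¹ • ∑ α ∈ Ap, lam α • α := by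
        simp only [smul_sum, smul_smul, div_eq_inv_mul]
    _ = β := by rw [hβ, smul_smul, inv_mul_cancel₀ hpos.ne', one_smul]

theorem forall_isBary_sum_mul_nonpos_iff {n : ℕ} (Ap : Finset (Fin n → ℝ)) (β : Fin n → ℝ)
    (c : (Fin n → ℝ) → ℝ) :
    (∀ lam, IsBary Ap β lam → ∑ α ∈ Ap, lam α * c α ≤ 0) ↔
      ∃ τ : Fin n → ℝ, ∀ α ∈ Ap, c α ≤ (α - β) ⬝ᵥ τ := by
  constructor
  · intro h
    obtain ⟨f, hf⟩ := exists_strongDual_ge_of_sum_mul_nonpos Ap (· - β) c fun lam hlam hsum => by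
      rcases (sum_nonneg hlam).eq_or_lt with hzero | hpos
      · rw [eq_comm, sum_eq_zero_iff_of_nonneg hlam] at hzero
        exact (sum_eq_zero fun α hα => by rw [hzero α hα, zero_mul]).le
      · have := h _ (isBary_div_sum hlam hsum hpos)
        simp only [div_mul_eq_mul_div, ← sum_div] at this
        exact ((div_le_iff₀ hpos).1 this).trans_eq (zero_mul _)
    refine ⟨fun j => f fun k => if j = k then 1 else 0, fun α hα => (hf α hα).trans_eq ?_⟩
    rw [← ContinuousLinearMap.coe_coe, LinearMap.pi_apply_eq_sum_univ]
    rfl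
  · rintro ⟨τ, hτ⟩ lam hlam
    calc ∑ α ∈ Ap, lam α * c α ≤ ∑ α ∈ Ap, lam α * ((α - β) ⬝ᵥ τ) :=
          sum_le_sum fun α hα => mul_le_mul_of_nonneg_left (hτ α hα) (hlam.1 α hα)
      _ = (∑ α ∈ Ap, lam α • (α - β)) ⬝ᵥ τ := by
          simp only [sum_dotProduct, smul_dotProduct, smul_eq_mul]
      _ = 0 := by rw [hlam.sum_smul_sub_eq_zero, zero_dotProduct]

theorem le_prod_rpow_iff_sum_mul_log_sub_nonpos {ι : Type*} {s : Finset ι} {v lam : ι → ℝ}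
    {a : ℝ} (ha : 0 < a) (hv : ∀ i ∈ s, 0 < v i) (hlam : ∑ i ∈ s, lam i = 1) :
    a ≤ ∏ i ∈ s, v i ^ lam i ↔ ∑ i ∈ s, lam i * (Real.log a - Real.log (v i)) ≤ 0 := by
  have hlog : Real.log (∏ i ∈ s, v i ^ lam i) = ∑ i ∈ s, lam i * Real.log (v i) := by
    rw [Real.log_prod fun i hi => (Real.rpow_pos_of_pos (hv i hi) _).ne']
    exact sum_congr rfl fun i hi => Real.log_rpow (hv i hi) _
  have hsplit : ∑ i ∈ s, lam i * (Real.log a - Real.log (v i)) =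
      Real.log a - ∑ i ∈ s, lam i * Real.log (v i) := by
    simp only [mul_sub, sum_sub_distrib, ← sum_mul, hlam, one_mul]
  rw [← Real.log_le_log_iff ha (prod_pos fun i hi => Real.rpow_pos_of_pos (hv i hi) _), hlog,
    hsplit, sub_nonpos]

theorem le_mul_exp_iff_log_sub_log_le {a b d : ℝ} (ha : 0 < a) (hb : 0 < b) :
    a ≤ b * Real.exp d ↔ Real.log a - Real.log b ≤ d := by
  rw [sub_le_iff_le_add', Real.log_le_iff_le_exp ha, Real.exp_add, Real.exp_log hb]

theorem bary_geom_mean_iff_linear_certificate_general {n : ℕ}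
    (Ap : Finset (Fin n → ℝ)) (β : Fin n → ℝ)
    (v : (Fin n → ℝ) → ℝ) (hv : ∀ α ∈ Ap, 0 < v α) (vβ : ℝ) :
    (∀ lam : (Fin n → ℝ) → ℝ, IsBary Ap β lam → |vβ| ≤ ∏ α ∈ Ap, v α ^ lam α)
      ↔ ∃ τ : Fin n → ℝ, ∀ α ∈ Ap,
          |vβ| ≤ v α * Real.exp (∑ i, (α i - β i) * τ i) := by
  -- Since `Real.log 0 = 0`, the logarithmic reformulation is only valid for `vβ ≠ 0`.
  rcases (abs_nonneg vβ).eq_or_lt with hzero | hpos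
  · rw [← hzero]
    exact ⟨fun _ => ⟨0, fun α hα => (mul_pos (hv α hα) (Real.exp_pos _)).le⟩,
      fun _ _ _ => prod_nonneg fun α hα => (Real.rpow_pos_of_pos (hv α hα) _).le⟩
  calc (∀ lam, IsBary Ap β lam → |vβ| ≤ ∏ α ∈ Ap, v α ^ lam α)
      ↔ ∀ lam, IsBary Ap β lam → ∑ α ∈ Ap, lam α * (Real.log |vβ| - Real.log (v α)) ≤ 0 :=
        forall₂_congr fun _ hlam => le_prod_rpow_iff_sum_mul_log_sub_nonpos hpos hv hlam.2.1
    _ ↔ ∃ τ, ∀ α ∈ Ap, Real.log |vβ| - Real.log (v α) ≤ (α - β) ⬝ᵥ τ :=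
        forall_isBary_sum_mul_nonpos_iff Ap β _
    _ ↔ _ := exists_congr fun _ => forall₂_congr fun α hα =>
        (le_mul_exp_iff_log_sub_log_le hpos (hv α hα)).symm

/-- The geometric-mean conditions over all barycentric coordinates are
equivalent to the existence of a single linear certificate `τ`
(`|v_β| ≤ v_α·exp⟨α−β,τ⟩` for all `α ∈ A⁺`, i.e. `ln(|v_β|/v_α) ≤ ⟨α−β,τ⟩`). -/
theorem bary_geom_mean_iff_linear_certificate {n : ℕ}
    (Ap : Finset (Fin n → ℝ)) (hAp : Ap.Nonempty) (β : Fin n → ℝ)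
    (v : (Fin n → ℝ) → ℝ) (hv : ∀ α ∈ Ap, 0 < v α) (vβ : ℝ) :
    (∀ lam : (Fin n → ℝ) → ℝ, IsBary Ap β lam → |vβ| ≤ ∏ α ∈ Ap, v α ^ lam α)
      ↔ ∃ τ : Fin n → ℝ, ∀ α ∈ Ap,
          |vβ| ≤ v α * Real.exp (∑ i, (α i - β i) * τ i) :=
  bary_geom_mean_iff_linear_certificate_general Ap β v hv vβ
end

section
/- Let A⁺ ⊆ ℝⁿ be a finite nonempty set and let β be a point of the convex hull of A⁺ with β ∉ A⁺. Let v : A⁺ ∪ {β} → ℝ satisfy v_α ≥ 0 for all α ∈ A⁺ and |v_β| ≤ ∏_{α∈A⁺} v_α^{λ_α} for every λ ∈ Λ(A⁺,β) (real powers, with the convention 0⁰ = 1). Then the exponential sum f_v(x) = ∑_{α∈A⁺} v_α·exp(⟨x,α⟩) + v_β·exp(⟨x,β⟩) is nonnegative for all x ∈ ℝⁿ; moreover, if v_β ≤ 0 then v ∈ C_{(A⁺,{β})}. -/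
open Finset

/-- The geometric-mean condition (membership in the dual cone conditions)
implies nonnegativity of the associated exponential sum; if moreover `v β ≤ 0`, then
`v ∈ C_{(A⁺,{β})}`. -/
theorem dual_conditions_imply_nonneg_and_sage {n : ℕ}
    (Ap : Finset (Fin n → ℝ)) (hAp : Ap.Nonempty)
    (β : Fin n → ℝ) (hβconv : β ∈ convexHull ℝ (Ap : Set (Fin n → ℝ))) (hβ : β ∉ Ap)
    (v : (Fin n → ℝ) → ℝ) (hv : ∀ α ∈ Ap, 0 ≤ v α)
    (hgeo : ∀ lam : (Fin n → ℝ) → ℝ, IsBary Ap β lam → |v β| ≤ ∏ α ∈ Ap, v α ^ lam α) :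
    (∀ x : Fin n → ℝ, 0 ≤ expSum (Ap ∪ {β}) v x) ∧ (v β ≤ 0 → InSAGE Ap {β} v) := by
  -- extract barycentric coordinates
  rw [Finset.convexHull_eq] at hβconv
  obtain ⟨lam, hlam0, hlam1, hlamc⟩ := hβconv
  rw [Finset.centerMass_eq_of_sum_1 _ _ hlam1] at hlamc
  simp only [id_eq] at hlamc
  have hbary : IsBary Ap β lam := ⟨hlam0, hlam1, hlamc⟩
  have hge := hgeo lam hbary
  have hmain : ∀ x : Fin n → ℝ, 0 ≤ expSum (Ap ∪ {β}) v x := by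
    intro x
    have hdisj : Disjoint Ap ({β} : Finset (Fin n → ℝ)) :=
      Finset.disjoint_singleton_right.mpr hβ
    have hsplit : expSum (Ap ∪ {β}) v x =
        (∑ α ∈ Ap, v α * Real.exp (∑ i, x i * α i)) + v β * Real.exp (∑ i, x i * β i) := by
      rw [expSum, Finset.sum_union hdisj, Finset.sum_singleton]
    rw [hsplit]
    -- key inequality
    have key : |v β| * Real.exp (∑ i, x i * β i) ≤ ∑ α ∈ Ap, v α * Real.exp (∑ i, x i * α i) := by
      have hz : ∀ α ∈ Ap, (0:ℝ) ≤ v α * Real.exp (∑ i, x i * α i) := fun α hα =>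
        mul_nonneg (hv α hα) (Real.exp_pos _).le
      have amgm := Real.geom_mean_le_arith_mean_weighted Ap lam
        (fun α => v α * Real.exp (∑ i, x i * α i)) hlam0 hlam1 hz
      have hβi : ∀ i, β i = ∑ α ∈ Ap, lam α * α i := by
        intro i
        rw [← hlamc, Finset.sum_apply]
        simp [smul_eq_mul]
      have hsum : ∑ α ∈ Ap, lam α * ∑ i, x i * α i = ∑ i, x i * β i := by
        simp_rw [hβi, Finset.mul_sum]
        rw [Finset.sum_comm]
        exact Finset.sum_congr rfl fun i _ => Finset.sum_congr rfl fun α _ => by ring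
      have hprod : ∏ α ∈ Ap, (v α * Real.exp (∑ i, x i * α i)) ^ lam α
          = (∏ α ∈ Ap, v α ^ lam α) * Real.exp (∑ i, x i * β i) := by
        calc ∏ α ∈ Ap, (v α * Real.exp (∑ i, x i * α i)) ^ lam α
            = ∏ α ∈ Ap, v α ^ lam α * Real.exp (lam α * ∑ i, x i * α i) := by
              refine Finset.prod_congr rfl fun α hα => ?_
              rw [Real.mul_rpow (hv α hα) (Real.exp_pos _).le, ← Real.exp_mul, mul_comm (∑ i, x i * α i)]
          _ = (∏ α ∈ Ap, v α ^ lam α) * Real.exp (∑ α ∈ Ap, lam α * ∑ i, x i * α i) := by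
              rw [Finset.prod_mul_distrib, Real.exp_sum]
          _ = _ := by rw [hsum]
      have hle1 : ∀ α ∈ Ap, lam α ≤ 1 := fun α hα =>
        hlam1 ▸ Finset.single_le_sum (fun b hb => hlam0 b hb) hα
      have hstep : ∑ α ∈ Ap, lam α * (v α * Real.exp (∑ i, x i * α i))
          ≤ ∑ α ∈ Ap, v α * Real.exp (∑ i, x i * α i) :=
        Finset.sum_le_sum fun α hα => mul_le_of_le_one_left (hz α hα) (hle1 α hα)
      calc |v β| * Real.exp (∑ i, x i * β i)
          ≤ (∏ α ∈ Ap, v α ^ lam α) * Real.exp (∑ i, x i * β i) :=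
            mul_le_mul_of_nonneg_right hge (Real.exp_pos _).le
        _ = ∏ α ∈ Ap, (v α * Real.exp (∑ i, x i * α i)) ^ lam α := hprod.symm
        _ ≤ ∑ α ∈ Ap, lam α * (v α * Real.exp (∑ i, x i * α i)) := amgm
        _ ≤ _ := hstep
    calc (0:ℝ) ≤ |v β| * Real.exp (∑ i, x i * β i) + v β * Real.exp (∑ i, x i * β i) := by
          have := neg_abs_le (v β)
          nlinarith [Real.exp_pos (∑ i, x i * β i)]
      _ ≤ _ := by linarith [key]
  refine ⟨hmain, fun hvβ => ?_⟩
  refine ⟨hv, fun b hb => by simpa [Finset.mem_singleton.mp hb] using hvβ, 1, fun _ => v, ?_, ?_, ?_⟩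
  · intro γ _; simp
  · intro i γ₁ h₁ γ₂ h₂ hd₁ hd₂
    rcases Finset.mem_union.mp h₁ with h | h
    · exact absurd (hv γ₁ h) (not_le.mpr hd₁)
    · rcases Finset.mem_union.mp h₂ with h' | h'
      · exact absurd (hv γ₂ h') (not_le.mpr hd₂)
      · rw [Finset.mem_singleton.mp h, Finset.mem_singleton.mp h']
  · intro i x; exact hmain x
end
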